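/- arXiv:math/0509154 — 6 statements merged into one kernel-verified Lean document; each statement's English description precedes it below -/
import Mathlib

section
/- Let G ⊂ S_d be a transitive imprimitive subgroup containing a transposition. Then all transpositions contained in G form a single conjugacy G-orbit. -/
/-- A transitive subgroup `G ⊆ S_d` is imprimitive if there is a partition of `{1,...,d}`
into blocks of equal cardinality `e`, `1 < e < d`, permuted by `G`. -/
def IsImprimitive {d : ℕ} (G : Subgroup (Equiv.Perm (Fin d))) : Prop :=
  ∃ (P : Finset (Finset (Fin d))) (e : ℕ), 1 < e ∧ e < d ∧
    (∀ B ∈ P, B.card = e) ∧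
    (∀ x : Fin d, ∃! B, B ∈ P ∧ x ∈ B) ∧
    (∀ g ∈ G, ∀ B ∈ P, B.image ⇑g ∈ P)

/-- In a transitive imprimitive subgroup `G ⊂ S_d` containing a transposition, all
transpositions contained in `G` form a single conjugacy `G`-orbit. -/
theorem transpositions_single_orbit {d : ℕ} (G : Subgroup (Equiv.Perm (Fin d)))
    (htrans : ∀ x y : Fin d, ∃ g ∈ G, g x = y)
    (himp : IsImprimitive G)
    (hswap : ∃ g ∈ G, Equiv.Perm.IsSwap g)
    (t t' : Equiv.Perm (Fin d))
    (ht : t ∈ G) (ht' : t' ∈ G) (hts : t.IsSwap) (ht's : t'.IsSwap) :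
    ∃ g ∈ G, g⁻¹ * t * g = t' := by
  obtain ⟨a, b, hab, rfl⟩ := hts
  obtain ⟨a', b', hab', rfl⟩ := ht's
  obtain ⟨g, hg, hga⟩ := htrans a' a
  -- conjugating by g⁻¹ sends swap a b to swap a' c with c := g⁻¹ b
  set c : Fin d := g⁻¹ b with hc
  have hga' : g⁻¹ a = a' := by rw [← hga, Equiv.Perm.inv_def, Equiv.symm_apply_apply]
  have hconj : g⁻¹ * Equiv.swap a b * g = Equiv.swap a' c := by
    have := Equiv.swap_apply_apply g⁻¹ a b
    rw [hga', ← hc, inv_inv] at this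
    rw [← this]
  have hac : a' ≠ c := by
    rw [← hga', hc]
    exact fun h => hab (g⁻¹.injective h)
  have hsG : Equiv.swap a' c ∈ G := by
    rw [← hconj]; exact mul_mem (mul_mem (inv_mem hg) ht) hg
  by_cases hcb : c = b'
  · exact ⟨g, hg, by rw [hconj, hcb]⟩
  · -- σ = swap c b' ∈ G since it equals swap a' c * swap a' b' * swap a' c
    have hab'c : a' ≠ b' := hab'
    have hσ : Equiv.swap a' c * Equiv.swap a' b' * Equiv.swap a' c = Equiv.swap c b' := by
      have := Equiv.swap_apply_apply (Equiv.swap a' c) a' b'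
      rw [Equiv.swap_apply_left, Equiv.swap_apply_of_ne_of_ne (Ne.symm hab') (fun h => hcb h.symm),
        Equiv.swap_inv] at this
      exact this.symm
    have hσG : Equiv.swap c b' ∈ G := by rw [← hσ]; exact mul_mem (mul_mem hsG ht') hsG
    refine ⟨g * Equiv.swap c b', mul_mem hg hσG, ?_⟩
    have hfin : Equiv.swap c b' * Equiv.swap a' c * (Equiv.swap c b')⁻¹ = Equiv.swap a' b' := by
      have := Equiv.swap_apply_apply (Equiv.swap c b') a' c
      rw [Equiv.swap_apply_left, Equiv.swap_apply_of_ne_of_ne hac hab'c] at this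
      exact this.symm
    calc (g * Equiv.swap c b')⁻¹ * Equiv.swap a b * (g * Equiv.swap c b')
        = (Equiv.swap c b')⁻¹ * (g⁻¹ * Equiv.swap a b * g) * Equiv.swap c b' := by
          rw [mul_inv_rev]; group
      _ = Equiv.swap c b' * Equiv.swap a' c * (Equiv.swap c b')⁻¹ := by
          rw [hconj, Equiv.swap_inv]
      _ = Equiv.swap a' b' := hfin
end

section
/- Let G ⊂ S_d be a transitive imprimitive subgroup containing a transposition (ab), and let H be the subgroup of G generated by the G-conjugates of (ab). If (αβ) ∈ G is any transposition, then α and β lie in the same orbit of H. -/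
/-- `x` and `y` lie in the same orbit of the subgroup `H ⊆ S_d`. -/
def SameOrbit {d : ℕ} (H : Subgroup (Equiv.Perm (Fin d))) (x y : Fin d) : Prop :=
  ∃ σ ∈ H, σ x = y

/-!
Conjugating `(a b)` by a `g ∈ G` with `g a = α` gives `(α c)` in `H`, where `c = g b ≠ α`.
If `c ≠ β`, conjugating once more by `(α β) ∈ G` gives `(β c)` in `H`, so `α` and `β` are joined
through `c`.
-/

open Equiv

theorem SameOrbit.trans {d : ℕ} {H : Subgroup (Perm (Fin d))} {x y z : Fin d}
    (hxy : SameOrbit H x y) (hyz : SameOrbit H y z) : SameOrbit H x z := by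
  obtain ⟨σ, hσ, rfl⟩ := hxy
  obtain ⟨τ, hτ, rfl⟩ := hyz
  exact ⟨τ * σ, mul_mem hτ hσ, rfl⟩

theorem sameOrbit_of_swap_mem {d : ℕ} {H : Subgroup (Perm (Fin d))} {x y : Fin d}
    (h : swap x y ∈ H) : SameOrbit H x y :=
  ⟨swap x y, h, swap_apply_left x y⟩

theorem swap_apply_mem_closure_conj {α : Type*} [DecidableEq α] {G : Subgroup (Perm α)}
    {g : Perm α} (hg : g ∈ G) (a b : α) :
    swap (g a) (g b) ∈ Subgroup.closure {σ : Perm α | ∃ g ∈ G, σ = g⁻¹ * swap a b * g} :=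
  Subgroup.subset_closure ⟨g⁻¹, inv_mem hg, by rw [inv_inv, swap_apply_apply]⟩

theorem transposition_points_same_orbit_general {d : ℕ} (G : Subgroup (Equiv.Perm (Fin d)))
    (htrans : ∀ x y : Fin d, ∃ g ∈ G, g x = y)
    (a b : Fin d) (hab : a ≠ b)
    (H : Subgroup (Equiv.Perm (Fin d)))
    (hH : H = Subgroup.closure {σ : Equiv.Perm (Fin d) | ∃ g ∈ G, σ = g⁻¹ * Equiv.swap a b * g})
    (α β : Fin d) (hmem : Equiv.swap α β ∈ G) :
    SameOrbit H α β := by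
  subst hH
  obtain ⟨g, hg, rfl⟩ := htrans a α
  have hαc : SameOrbit _ (g a) (g b) := sameOrbit_of_swap_mem (swap_apply_mem_closure_conj hg a b)
  by_cases hcβ : g b = β
  · exact hcβ ▸ hαc
  have hβc := swap_apply_mem_closure_conj (mul_mem hmem hg) a b
  rw [Perm.mul_apply, Perm.mul_apply, swap_apply_left,
    swap_apply_of_ne_of_ne (g.injective.ne hab.symm) hcβ, swap_comm β] at hβc
  exact hαc.trans (sameOrbit_of_swap_mem hβc)

/-- If `G ⊂ S_d` is transitive imprimitive containing the transposition `(ab)`, and `H`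
is the subgroup generated by the `G`-conjugates of `(ab)`, then the two points of any
transposition `(αβ) ∈ G` lie in the same `H`-orbit. -/
theorem transposition_points_same_orbit {d : ℕ} (G : Subgroup (Equiv.Perm (Fin d)))
    (htrans : ∀ x y : Fin d, ∃ g ∈ G, g x = y)
    (himp : IsImprimitive G)
    (a b : Fin d) (hab : a ≠ b) (hswapG : Equiv.swap a b ∈ G)
    (H : Subgroup (Equiv.Perm (Fin d)))
    (hH : H = Subgroup.closure {σ : Equiv.Perm (Fin d) | ∃ g ∈ G, σ = g⁻¹ * Equiv.swap a b * g})
    (α β : Fin d) (hαβ : α ≠ β) (hmem : Equiv.swap α β ∈ G) :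
    SameOrbit H α β :=
  transposition_points_same_orbit_general G htrans a b hab H hH α β hmem
end

section
/- Let t_1,...,t_n be transpositions in S_d generating a subgroup whose orbits on {1,...,d} are Σ_1,...,Σ_m. Let a, b be two distinct points lying in the same orbit Σ_i. Then the sequence (t_1,...,t_n) is braid-equivalent to a sequence (t'_1,...,t'_n) with t'_1 = (ab), i.e. it can be transformed into such a sequence by a finite number of elementary moves. -/
/-- One elementary braid move `σ_j`: replace an adjacent pair `(a, b)` by `(a b a⁻¹, a)`. -/
inductive BraidStep {G : Type*} [Group G] : List G → List G → Prop
  | step (l₁ l₂ : List G) (a b : G) :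
      BraidStep (l₁ ++ a :: b :: l₂) (l₁ ++ (a * b * a⁻¹) :: a :: l₂)

/-- Braid equivalence of sequences: the equivalence relation generated by the
elementary moves `σ_j` (and hence also by their inverses). -/
def BraidEquiv {G : Type*} [Group G] : List G → List G → Prop :=
  Relation.EqvGen BraidStep

/-! Induct on the length of the sequence. Some entry `t = (a c)` moves `a`; pulling it to the
front conjugates the entries it passes and gives `t :: M` with the same generated group. Adjoining
`(a c)` merges only the orbits of `a` and `c`, so `b` lies in the `M`-orbit of `a` or of `c`, and
by induction `M` is equivalent to a sequence headed by `(a b)`, resp. `(c b)`. One more move brings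
`(a b)` to the front, in the second case as `t (c b) t⁻¹`. -/

namespace BraidEquiv

variable {G : Type*} [Group G] {L L' L'' : List G}

theorem refl (L : List G) : BraidEquiv L L := Relation.EqvGen.refl L

theorem symm (h : BraidEquiv L L') : BraidEquiv L' L := Relation.EqvGen.symm _ _ h

theorem trans (h : BraidEquiv L L') (h' : BraidEquiv L' L'') : BraidEquiv L L'' :=
  Relation.EqvGen.trans _ _ _ h h'

theorem of_step (h : BraidStep L L') : BraidEquiv L L' := Relation.EqvGen.rel _ _ h

theorem cons (t : G) (h : BraidEquiv L L') : BraidEquiv (t :: L) (t :: L') := by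
  induction h with
  | rel _ _ h => obtain ⟨l₁, l₂, a, b⟩ := h; exact of_step (BraidStep.step (t :: l₁) l₂ a b)
  | refl => exact refl _
  | symm _ _ _ ih => exact ih.symm
  | trans _ _ _ _ _ ih ih' => exact ih.trans ih'

theorem cons_cons_conj (x y : G) (l : List G) :
    BraidEquiv (x :: y :: l) (x * y * x⁻¹ :: x :: l) :=
  of_step (BraidStep.step [] l x y)

theorem cons_cons_conj_inv (x y : G) (l : List G) :
    BraidEquiv (x :: y :: l) (y :: y⁻¹ * x * y :: l) := by
  have h := (cons_cons_conj y (y⁻¹ * x * y) l).symm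
  rwa [show y * (y⁻¹ * x * y) * y⁻¹ = x by group] at h

theorem pull (l₁ : List G) (t : G) (l₂ : List G) :
    BraidEquiv (l₁ ++ t :: l₂) (t :: l₁.map (fun x => t⁻¹ * x * t) ++ l₂) := by
  induction l₁ with
  | nil => exact refl _
  | cons x l ih => simpa using (cons x ih).trans (cons_cons_conj_inv x t _)

theorem _root_.Subgroup.closure_insert_conj_insert (a b : G) (S : Set G) :
    Subgroup.closure (insert (a * b * a⁻¹) (insert a S)) =
      Subgroup.closure (insert a (insert b S)) := by
  have mem {s : Set G} {x : G} (hx : x ∈ s) : x ∈ Subgroup.closure s := Subgroup.subset_closure hx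
  apply le_antisymm <;> rw [Subgroup.closure_le]
  · rintro x (rfl | rfl | hx)
    · exact mul_mem (mul_mem (mem (by simp)) (mem (by simp))) (inv_mem (mem (by simp)))
    · exact mem (by simp)
    · exact mem (by simp [hx])
  · rintro x (rfl | rfl | hx)
    · exact mem (by simp)
    · have h : a⁻¹ * (a * x * a⁻¹) * a ∈ Subgroup.closure (insert (a * x * a⁻¹) (insert a S)) :=
        mul_mem (mul_mem (inv_mem (mem (by simp))) (mem (by simp))) (mem (by simp))
      simpa [mul_assoc] using h
    · exact mem (by simp [hx])

theorem _root_.BraidStep.closure_eq (h : BraidStep L L') :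
    Subgroup.closure {x | x ∈ L} = Subgroup.closure {x | x ∈ L'} := by
  obtain ⟨l₁, l₂, a, b⟩ := h
  convert (Subgroup.closure_insert_conj_insert a b {x | x ∈ l₁ ++ l₂}).symm using 2 <;>
    ext <;> simp <;> tauto

theorem closure_eq (h : BraidEquiv L L') :
    Subgroup.closure {x | x ∈ L} = Subgroup.closure {x | x ∈ L'} := by
  induction h with
  | rel _ _ h => exact h.closure_eq
  | refl => rfl
  | symm _ _ _ ih => exact ih.symm
  | trans _ _ _ _ _ ih ih' => exact ih.trans ih'

end BraidEquiv

namespace Equiv.Perm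

variable {α : Type*}

theorem exists_mem_apply_ne_of_mem_closure {S : Set (Perm α)} {σ : Perm α}
    (hσ : σ ∈ Subgroup.closure S) {a : α} (ha : σ a ≠ a) : ∃ t ∈ S, t a ≠ a := by
  by_contra! hS
  exact ha ((Subgroup.closure_le (MulAction.stabilizer _ a)).2 hS hσ)

variable [DecidableEq α]

theorem IsSwap.eq_swap_apply {t : Perm α} (ht : t.IsSwap) {a : α} (ha : t a ≠ a) :
    t = swap a (t a) := by
  obtain ⟨x, y, -, rfl⟩ := ht
  obtain ⟨-, rfl | rfl⟩ := swap_apply_ne_self_iff.mp ha <;> simp [swap_comm]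

theorem IsSwap.conj {t : Perm α} (ht : t.IsSwap) (σ : Perm α) : (σ * t * σ⁻¹).IsSwap := by
  obtain ⟨x, y, hxy, rfl⟩ := ht
  exact ⟨σ x, σ y, σ.injective.ne hxy, (swap_apply_apply σ x y).symm⟩

theorem exists_apply_eq_of_mem_closure_insert_swap {S : Set (Perm α)} {a c : α} {σ : Perm α}
    (hσ : σ ∈ Subgroup.closure (insert (swap a c) S)) :
    (∃ τ ∈ Subgroup.closure S, τ a = σ a) ∨ ∃ τ ∈ Subgroup.closure S, τ c = σ a := by
  set O := {x | (∃ τ ∈ Subgroup.closure S, τ a = x) ∨ ∃ τ ∈ Subgroup.closure S, τ c = x}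
  have hS {s : Perm α} (hs : s ∈ Subgroup.closure S) {x : α} (hx : x ∈ O) : s x ∈ O := by
    rcases hx with ⟨τ, hτ, rfl⟩ | ⟨τ, hτ, rfl⟩
    exacts [Or.inl ⟨s * τ, mul_mem hs hτ, rfl⟩, Or.inr ⟨s * τ, mul_mem hs hτ, rfl⟩]
  have hswap {x : α} (hx : x ∈ O) : swap a c x ∈ O := by
    rcases eq_or_ne x a with rfl | hxa
    · exact Or.inr ⟨1, one_mem _, by simp⟩
    rcases eq_or_ne x c with rfl | hxc
    · exact Or.inl ⟨1, one_mem _, by simp⟩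
    rwa [swap_apply_of_ne_of_ne hxa hxc]
  have hO : ∀ x ∈ O, σ x ∈ O := by
    induction hσ using Subgroup.closure_induction'' with
    | mem s hs =>
      rcases hs with rfl | hs
      exacts [fun _ => hswap, fun _ => hS (Subgroup.subset_closure hs)]
    | inv_mem s hs =>
      rcases hs with rfl | hs
      exacts [by simpa using fun _ => hswap, fun _ => hS (inv_mem (Subgroup.subset_closure hs))]
    | one => exact fun x hx => hx
    | mul s s' _ _ ih ih' => exact fun x hx => ih _ (ih' x hx)
  exact hO a (Or.inl ⟨1, one_mem _, rfl⟩)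

theorem IsSwap.exists_braidEquiv_swap_cons {L : List (Perm α)} (hL : ∀ t ∈ L, t.IsSwap)
    {σ : Perm α} (hσ : σ ∈ Subgroup.closure {x | x ∈ L}) {a : α} (ha : σ a ≠ a) :
    ∃ rest, BraidEquiv L (swap a (σ a) :: rest) := by
  obtain ⟨t, htL, hta⟩ := exists_mem_apply_ne_of_mem_closure hσ ha
  obtain ⟨l₁, l₂, rfl⟩ := List.append_of_mem htL
  set c := t a
  have ht : t = swap a c := (hL t htL).eq_swap_apply hta
  set M := l₁.map (fun x => t⁻¹ * x * t) ++ l₂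
  have hpull : BraidEquiv (l₁ ++ t :: l₂) (t :: M) := BraidEquiv.pull l₁ t l₂
  have hM : ∀ u ∈ M, u.IsSwap := by
    simp only [M, List.mem_append, List.mem_map]
    rintro u (⟨x, hx, rfl⟩ | hu)
    · simpa using (hL x (by simp [hx])).conj t⁻¹
    · exact hL u (by simp [hu])
  have hσM : σ ∈ Subgroup.closure (insert (swap a c) {x | x ∈ M}) := by
    rw [hpull.closure_eq, show {x | x ∈ t :: M} = insert t {x | x ∈ M} from
      Set.ext fun _ => List.mem_cons] at hσ
    rwa [← ht]
  have hlen : M.length < (l₁ ++ t :: l₂).length := by simp [M]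
  rcases exists_apply_eq_of_mem_closure_insert_swap hσM with ⟨τ, hτ, hτa⟩ | ⟨τ, hτ, hτc⟩
  · obtain ⟨rest, h⟩ := exists_braidEquiv_swap_cons hM hτ (hτa ▸ ha)
    rw [hτa] at h
    exact ⟨_, hpull.trans ((h.cons t).trans (BraidEquiv.cons_cons_conj_inv _ _ _))⟩
  rcases eq_or_ne c (σ a) with hc | hc
  · exact ⟨M, hc ▸ ht ▸ hpull⟩
  · obtain ⟨rest, h⟩ := exists_braidEquiv_swap_cons hM hτ (hτc ▸ hc.symm)
    rw [hτc] at h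
    have hconj : t * swap c (σ a) * t⁻¹ = swap a (σ a) := by
      rw [← swap_apply_apply, ht, swap_apply_right, swap_apply_of_ne_of_ne ha hc.symm]
    exact ⟨t :: rest, hpull.trans ((h.cons t).trans (hconj ▸ BraidEquiv.cons_cons_conj _ _ _))⟩
termination_by L.length

end Equiv.Perm

/-- A sequence of transpositions `(t_1,...,t_n)` with `a ≠ b` in the same orbit of
`⟨t_1,...,t_n⟩` is braid-equivalent to a sequence starting with `(ab)`. -/
theorem braidEquiv_head_swap {d : ℕ} (L : List (Equiv.Perm (Fin d)))
    (hL : ∀ t ∈ L, t.IsSwap)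
    (a b : Fin d) (hab : a ≠ b)
    (horb : ∃ σ ∈ Subgroup.closure {x : Equiv.Perm (Fin d) | x ∈ L}, σ a = b) :
    ∃ L' : List (Equiv.Perm (Fin d)),
      BraidEquiv L L' ∧ L'.head? = some (Equiv.swap a b) := by
  obtain ⟨σ, hσ, rfl⟩ := horb
  obtain ⟨rest, h⟩ := Equiv.Perm.IsSwap.exists_braidEquiv_swap_cons hL hσ (Ne.symm hab)
  exact ⟨_, h, rfl⟩
end

section
/- Let (t_1,...,t_n) be a sequence of transpositions in S_d with product s = t_1⋯t_n. Define |s| = d minus the number of cycles of s (including fixed points), and let |Σ| = Σ_j (#Σ_j − 1) where Σ_1,...,Σ_m are the orbits of ⟨t_1,...,t_n⟩ on {1,...,d}. Then n + |s| ≡ 0 (mod 2) and n + |s| ≥ 2|Σ|. -/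
/-- `|s|` : `d` minus the number of cycles of `s` (counting fixed points), equal to
`Σ_i (e_i - 1)` over the cycle type of `s`. -/
def permLen {d : ℕ} (s : Equiv.Perm (Fin d)) : ℕ :=
  s.cycleType.sum - Multiset.card s.cycleType

/-- The number of orbits of a subgroup `H ⊆ S_d` on `{1,...,d}`. -/
noncomputable def numOrbits {d : ℕ} (H : Subgroup (Equiv.Perm (Fin d))) : ℕ :=
  Nat.card (MulAction.orbitRel.Quotient H (Fin d))


open Equiv MulAction Subgroup

namespace LenAux

variable {α : Type*}

/-- The setoid obtained from `r` by merging the classes of `a` and `b`. -/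
def merge (r : Setoid α) (a b : α) : Setoid α where
  r x y := r x y ∨ (r x a ∧ r b y) ∨ (r x b ∧ r a y)
  iseqv := by
    constructor
    · intro x; exact Or.inl (r.iseqv.refl x)
    · rintro x y (h | ⟨h1, h2⟩ | ⟨h1, h2⟩)
      · exact Or.inl (r.iseqv.symm h)
      · exact Or.inr (Or.inr ⟨r.iseqv.symm h2, r.iseqv.symm h1⟩)
      · exact Or.inr (Or.inl ⟨r.iseqv.symm h2, r.iseqv.symm h1⟩)
    · rintro x y z (h | ⟨h1, h2⟩ | ⟨h1, h2⟩) (g | ⟨g1, g2⟩ | ⟨g1, g2⟩)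
      · exact Or.inl (r.iseqv.trans h g)
      · exact Or.inr (Or.inl ⟨r.iseqv.trans h g1, g2⟩)
      · exact Or.inr (Or.inr ⟨r.iseqv.trans h g1, g2⟩)
      · exact Or.inr (Or.inl ⟨h1, r.iseqv.trans h2 g⟩)
      · exact Or.inl (r.iseqv.trans h1 (r.iseqv.trans (r.iseqv.symm (r.iseqv.trans h2 g1)) g2))
      · exact Or.inl (r.iseqv.trans h1 g2)
      · exact Or.inr (Or.inr ⟨h1, r.iseqv.trans h2 g⟩)
      · exact Or.inl (r.iseqv.trans h1 g2)
      · exact Or.inl (r.iseqv.trans h1 (r.iseqv.trans (r.iseqv.symm (r.iseqv.trans h2 g1)) g2))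

theorem merge_apply (r : Setoid α) (a b x y : α) :
    merge r a b x y ↔ (r x y ∨ (r x a ∧ r b y) ∨ (r x b ∧ r a y)) := Iff.rfl

theorem merge_apply_of_rel {r : Setoid α} {a b : α} (hab : r a b) (x y : α) :
    merge r a b x y ↔ r x y := by
  rw [merge_apply]
  constructor
  · rintro (h | ⟨h1, h2⟩ | ⟨h1, h2⟩)
    · exact h
    · exact r.iseqv.trans h1 (r.iseqv.trans hab h2)
    · exact r.iseqv.trans h1 (r.iseqv.trans (r.iseqv.symm hab) h2)
  · exact Or.inl

theorem card_quotient_congr {r r' : Setoid α} (h : ∀ x y, r x y ↔ r' x y) :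
    Nat.card (Quotient r) = Nat.card (Quotient r') :=
  Nat.card_congr (Quotient.congr (Equiv.refl α) (by simpa using h))

theorem card_quotient_merge [Finite α] {r : Setoid α} {a b : α} (hab : ¬ r a b) :
    Nat.card (Quotient (merge r a b)) + 1 = Nat.card (Quotient r) := by
  classical
  have wd : ∀ x y, r x y →
      (if r x b then (Sum.inr () : Quotient (merge r a b) ⊕ Unit)
        else Sum.inl (Quotient.mk _ x)) =
      (if r y b then Sum.inr () else Sum.inl (Quotient.mk _ y)) := by
    intro x y hxy
    by_cases hx : r x b
    · rw [if_pos hx, if_pos (r.iseqv.trans (r.iseqv.symm hxy) hx)]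
    · rw [if_neg hx, if_neg (fun hy => hx (r.iseqv.trans hxy hy))]
      exact congrArg Sum.inl (Quotient.sound (Or.inl hxy))
  let f : Quotient r → Quotient (merge r a b) ⊕ PUnit := Quotient.lift _ wd
  have hbij : Function.Bijective f := by
    constructor
    · rintro ⟨x⟩ ⟨y⟩ h
      change f (Quotient.mk r x) = f (Quotient.mk r y) at h
      by_cases hx : r x b <;> by_cases hy : r y b <;>
        simp only [f, Quotient.lift_mk, if_pos, if_neg, hx, hy, if_true, if_false] at h
      · exact Quotient.sound (r.iseqv.trans hx (r.iseqv.symm hy))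
      · cases h
      · cases h
      · rcases Quotient.exact (Sum.inl.inj h) with h' | ⟨h1, h2⟩ | ⟨h1, h2⟩
        · exact Quotient.sound h'
        · exact absurd (r.iseqv.symm h2) hy
        · exact absurd h1 hx
    · rintro (q | u)
      · obtain ⟨x⟩ := q
        by_cases hx : r x b
        · refine ⟨Quotient.mk r a, ?_⟩
          show (if r a b then _ else Sum.inl (Quotient.mk _ a)) = _
          rw [if_neg hab]
          exact congrArg Sum.inl
            (Quotient.sound (Or.inr (Or.inl ⟨r.iseqv.refl a, r.iseqv.symm hx⟩)))
        · exact ⟨Quotient.mk r x, by simp only [f, Quotient.lift_mk, if_neg hx]; rfl⟩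
      · exact ⟨Quotient.mk r b, by simp only [f, Quotient.lift_mk, if_pos (r.iseqv.refl b)]⟩
  have hcard := Nat.card_eq_of_bijective f hbij
  rw [Nat.card_sum, Nat.card_unique (α := Unit)] at hcard
  omega


section Orbits

variable {G : Type*} [Group G] [MulAction G α]

theorem orbitRel_subgroup_apply {H : Subgroup G} {x y : α} :
    orbitRel H α x y ↔ ∃ g ∈ H, g • y = x := by
  rw [orbitRel_apply, mem_orbit_iff]
  constructor
  · rintro ⟨⟨g, hg⟩, h⟩; exact ⟨g, hg, h⟩
  · rintro ⟨g, hg, h⟩; exact ⟨⟨g, hg⟩, h⟩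

theorem orbitRel_le_of_le {H K : Subgroup G} (h : H ≤ K) {x y : α}
    (hxy : orbitRel H α x y) : orbitRel K α x y := by
  rw [orbitRel_subgroup_apply] at hxy ⊢
  obtain ⟨g, hg, e⟩ := hxy
  exact ⟨g, h hg, e⟩

theorem card_orbitQuot_le_of_le [Finite α] {H K : Subgroup G} (h : H ≤ K) :
    Nat.card (orbitRel.Quotient K α) ≤ Nat.card (orbitRel.Quotient H α) := by
  refine Nat.card_le_card_of_surjective
    (Quotient.map' id (fun x y hxy => orbitRel_le_of_le h hxy)) ?_
  rintro ⟨x⟩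
  exact ⟨Quotient.mk'' x, rfl⟩

theorem card_orbitQuot_le [Finite α] (H : Subgroup G) :
    Nat.card (orbitRel.Quotient H α) ≤ Nat.card α := by
  refine Nat.card_le_card_of_surjective (fun x : α => (Quotient.mk'' x : orbitRel.Quotient H α)) ?_
  rintro ⟨x⟩
  exact ⟨x, rfl⟩

theorem card_orbitQuot_bot [Finite α] :
    Nat.card (orbitRel.Quotient (⊥ : Subgroup G) α) = Nat.card α := by
  symm
  refine Nat.card_eq_of_bijective (fun x : α => (Quotient.mk'' x : orbitRel.Quotient (⊥ : Subgroup G) α)) ⟨?_, ?_⟩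
  · intro x y h
    have := Quotient.eq''.mp h
    rw [orbitRel_subgroup_apply] at this
    obtain ⟨g, hg, e⟩ := this
    rw [Subgroup.mem_bot] at hg
    subst hg
    simpa using e.symm
  · rintro ⟨x⟩
    exact ⟨x, rfl⟩

end Orbits

section Perms

variable [DecidableEq α]

theorem orbitRel_zpowers_apply {v : Equiv.Perm α} {x y : α} :
    orbitRel (zpowers v) α x y ↔ ∃ k : ℤ, (v ^ k) y = x := by
  rw [orbitRel_subgroup_apply]
  constructor
  · rintro ⟨g, hg, e⟩
    rw [Subgroup.mem_zpowers_iff] at hg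
    obtain ⟨k, rfl⟩ := hg
    exact ⟨k, e⟩
  · rintro ⟨k, e⟩
    exact ⟨v ^ k, zpow_mem (Subgroup.mem_zpowers v) k, e⟩

/-- Adjoining the swap of `a` and `b` to a set of generators merges the orbits
of `a` and `b` and changes nothing else. -/
theorem orbitRel_closure_insert_swap (S : Set (Equiv.Perm α)) (a b : α) (x y : α) :
    orbitRel (closure (insert (Equiv.swap a b) S)) α x y ↔
      merge (orbitRel (closure S) α) a b x y := by
  set r := orbitRel (closure S) α with hr
  set K := closure (insert (Equiv.swap a b) S) with hK
  have hSK : closure S ≤ K := closure_mono (Set.subset_insert _ _)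
  have htK : Equiv.swap a b ∈ K := subset_closure (Set.mem_insert _ _)
  have horb : ∀ g ∈ K, ∀ z : α, merge r a b (g z) z := by
    intro g hg
    induction hg using closure_induction with
    | mem g hgS =>
      rcases hgS with hgt | hgS
      · intro z
        subst hgt
        by_cases hza : z = a
        · rw [hza, Equiv.swap_apply_left]
          exact Or.inr (Or.inr ⟨r.iseqv.refl b, r.iseqv.refl a⟩)
        · by_cases hzb : z = b
          · rw [hzb, Equiv.swap_apply_right]
            exact Or.inr (Or.inl ⟨r.iseqv.refl a, r.iseqv.refl b⟩)
          · rw [Equiv.swap_apply_of_ne_of_ne hza hzb]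
      · intro z
        refine Or.inl (orbitRel_subgroup_apply.mpr ⟨g, subset_closure hgS, rfl⟩)
    | one => intro z; exact (merge r a b).iseqv.refl z
    | mul g h _ _ hg hh =>
      intro z
      exact (merge r a b).iseqv.trans (hg (h z)) (hh z)
    | inv g _ hg =>
      intro z
      have := hg (g⁻¹ z)
      rw [← Equiv.Perm.mul_apply, mul_inv_cancel, Equiv.Perm.one_apply] at this
      exact (merge r a b).iseqv.symm this
  constructor
  · intro h
    rw [orbitRel_subgroup_apply] at h
    obtain ⟨g, hg, rfl⟩ := h
    exact horb g hg y
  · have step : ∀ u w : α, r u w → orbitRel K α u w := fun u w h => orbitRel_le_of_le hSK h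
    have hab' : orbitRel K α a b := by
      rw [orbitRel_subgroup_apply]
      exact ⟨Equiv.swap a b, htK, Equiv.swap_apply_right a b⟩
    rintro (h | ⟨h1, h2⟩ | ⟨h1, h2⟩)
    · exact step _ _ h
    · exact (orbitRel K α).iseqv.trans (step _ _ h1)
        ((orbitRel K α).iseqv.trans hab' (step _ _ h2))
    · exact (orbitRel K α).iseqv.trans (step _ _ h1)
        ((orbitRel K α).iseqv.trans ((orbitRel K α).iseqv.symm hab') (step _ _ h2))

end Perms

section SwapMul

variable [Fintype α] [DecidableEq α]

theorem orbitRel_swap_mul {a b : α} (v : Equiv.Perm α)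
    (hb : ¬ ∃ k : ℤ, (v ^ k) a = b) (x y : α) :
    orbitRel (zpowers (Equiv.swap a b * v)) α x y ↔
      orbitRel (closure (insert (Equiv.swap a b) {v})) α x y := by
  set t := Equiv.swap a b with ht
  set u := t * v with hu
  have husym : ∀ {x y : α}, (∃ k : ℤ, (u ^ k) x = y) → ∃ k : ℤ, (u ^ k) y = x := by
    rintro x y ⟨k, hk⟩
    exact ⟨-k, by
      rw [← hk, ← Equiv.Perm.mul_apply, ← zpow_add, neg_add_cancel, zpow_zero,
        Equiv.Perm.one_apply]⟩
  have hutrans : ∀ {x y z : α}, (∃ k : ℤ, (u ^ k) x = y) → (∃ k : ℤ, (u ^ k) y = z) →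
      ∃ k : ℤ, (u ^ k) x = z := by
    rintro x y z ⟨k, hk⟩ ⟨l, hl⟩
    exact ⟨l + k, by rw [zpow_add, Equiv.Perm.mul_apply, hk, hl]⟩
  have key : ∀ k : ℕ, ((u ^ k) a = (v ^ k) a) ∨ ∃ i : ℤ, (u ^ i) a = b := by
    intro k
    induction k with
    | zero => exact Or.inl (by simp)
    | succ k ih =>
      rcases ih with h | h
      · have hcomp : (u ^ (k + 1)) a = t ((v ^ (k + 1)) a) := by
          rw [pow_succ', Equiv.Perm.mul_apply, h, hu, Equiv.Perm.mul_apply,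
            pow_succ' v k, Equiv.Perm.mul_apply]
        by_cases h1 : (v ^ (k + 1)) a = a
        · refine Or.inr ⟨((k + 1 : ℕ) : ℤ), ?_⟩
          rw [zpow_natCast, hcomp, h1, ht, Equiv.swap_apply_left]
        · by_cases h2 : (v ^ (k + 1)) a = b
          · exact absurd ⟨((k + 1 : ℕ) : ℤ), by rw [zpow_natCast]; exact h2⟩ hb
          · refine Or.inl ?_
            rw [hcomp, ht, Equiv.swap_apply_of_ne_of_ne h1 h2]
      · exact Or.inr h
  have habu : ∃ i : ℤ, (u ^ i) a = b := by
    have hord : 0 < orderOf v := orderOf_pos v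
    rcases key (orderOf v - 1) with h | h
    · refine ⟨(orderOf v : ℤ), ?_⟩
      rw [zpow_natCast]
      have h1 : u ^ orderOf v = u * u ^ (orderOf v - 1) := by
        rw [← pow_succ']; congr 1; omega
      rw [h1, Equiv.Perm.mul_apply, h, hu, Equiv.Perm.mul_apply]
      have h2 : v ((v ^ (orderOf v - 1)) a) = a := by
        rw [← Equiv.Perm.mul_apply, ← pow_succ']
        have h3 : orderOf v - 1 + 1 = orderOf v := by omega
        rw [h3, pow_orderOf_eq_one, Equiv.Perm.one_apply]
      rw [h2, ht, Equiv.swap_apply_left]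
    · exact h
  have hstep : ∀ x : α, ∃ k : ℤ, (u ^ k) x = v x := by
    intro x
    by_cases h1 : v x = a
    · have hx : u x = b := by rw [hu, Equiv.Perm.mul_apply, h1, ht, Equiv.swap_apply_left]
      rw [h1]
      exact hutrans ⟨1, by rw [zpow_one]; exact hx⟩ (husym habu)
    · by_cases h2 : v x = b
      · have hx : u x = a := by rw [hu, Equiv.Perm.mul_apply, h2, ht, Equiv.swap_apply_right]
        rw [h2]
        exact hutrans ⟨1, by rw [zpow_one]; exact hx⟩ habu
      · exact ⟨1, by rw [zpow_one, hu, Equiv.Perm.mul_apply, ht,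
          Equiv.swap_apply_of_ne_of_ne h1 h2]⟩
  have hpow : ∀ (k : ℕ) (x : α), ∃ j : ℤ, (u ^ j) x = (v ^ k) x := by
    intro k
    induction k with
    | zero => intro x; exact ⟨0, by simp⟩
    | succ k ih =>
      intro x
      have h1 : (v ^ (k + 1)) x = v ((v ^ k) x) := by
        rw [pow_succ', Equiv.Perm.mul_apply]
      rw [h1]
      exact hutrans (ih x) (hstep ((v ^ k) x))
  have hz : ∀ (k : ℤ) (x : α), ∃ j : ℤ, (u ^ j) x = (v ^ k) x := by
    intro k x
    cases k with
    | ofNat n => rw [Int.ofNat_eq_natCast, zpow_natCast]; exact hpow n x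
    | negSucc n =>
      have harith : ((n + 1 : ℕ) : ℤ) + Int.negSucc n = 0 := by
        simp [Int.negSucc_eq]
      have hinv : (v ^ (n + 1 : ℕ)) ((v ^ Int.negSucc n) x) = x := by
        rw [← zpow_natCast v (n + 1), ← Equiv.Perm.mul_apply, ← zpow_add, harith, zpow_zero,
          Equiv.Perm.one_apply]
      obtain ⟨j, hj⟩ := hpow (n + 1) ((v ^ Int.negSucc n) x)
      rw [hinv] at hj
      exact husym ⟨j, hj⟩
  have hrr : ∀ p q : α, orbitRel (closure ({v} : Set (Equiv.Perm α))) α p q ↔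
      ∃ k : ℤ, (v ^ k) q = p := by
    intro p q
    rw [← zpowers_eq_closure, orbitRel_zpowers_apply]
  constructor
  · intro h
    refine orbitRel_le_of_le ?_ h
    exact zpowers_le.mpr (mul_mem (subset_closure (Set.mem_insert _ _))
      (subset_closure (Set.mem_insert_of_mem _ rfl)))
  · intro h
    rw [orbitRel_closure_insert_swap] at h
    rw [orbitRel_zpowers_apply]
    rcases h with h | ⟨h1, h2⟩ | ⟨h1, h2⟩
    · obtain ⟨k, hk⟩ := (hrr x y).mp h
      obtain ⟨j, hj⟩ := hz k y
      rw [hk] at hj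
      exact ⟨j, hj⟩
    · obtain ⟨k1, hk1⟩ := (hrr x a).mp h1
      obtain ⟨j1, hj1⟩ := hz k1 a
      rw [hk1] at hj1
      obtain ⟨k2, hk2⟩ := (hrr b y).mp h2
      obtain ⟨j2, hj2⟩ := hz k2 y
      rw [hk2] at hj2
      exact hutrans ⟨j2, hj2⟩ (hutrans (husym habu) ⟨j1, hj1⟩)
    · obtain ⟨k1, hk1⟩ := (hrr x b).mp h1
      obtain ⟨j1, hj1⟩ := hz k1 b
      rw [hk1] at hj1
      obtain ⟨k2, hk2⟩ := (hrr a y).mp h2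
      obtain ⟨j2, hj2⟩ := hz k2 y
      rw [hk2] at hj2
      exact hutrans ⟨j2, hj2⟩ (hutrans habu ⟨j1, hj1⟩)

open Equiv.Perm in
theorem card_orbitQuot_zpowers (v : Equiv.Perm α) :
    Nat.card (orbitRel.Quotient (zpowers v) α) =
      (Fintype.card α - v.support.card) + v.cycleFactorsFinset.card := by
  classical
  have wd : ∀ x y : α, orbitRel (zpowers v) α x y →
      (if h : v x = x then (Sum.inl ⟨x, h⟩ : {z : α // v z = z} ⊕ v.cycleFactorsFinset)
        else Sum.inr ⟨v.cycleOf x, cycleOf_mem_cycleFactorsFinset_iff.mpr (mem_support.mpr h)⟩) =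
      (if h : v y = y then Sum.inl ⟨y, h⟩
        else Sum.inr ⟨v.cycleOf y, cycleOf_mem_cycleFactorsFinset_iff.mpr (mem_support.mpr h)⟩) := by
    intro x y hxy
    rw [orbitRel_zpowers_apply] at hxy
    obtain ⟨k, hk⟩ := hxy
    have hsc : v.SameCycle x y := Equiv.Perm.SameCycle.symm (⟨k, hk⟩ : v.SameCycle y x)
    by_cases hy : v y = y
    · have hxy' : x = y := by
        rw [← hk, zpow_apply_eq_self_of_apply_eq_self hy]
      subst hxy'
      rfl
    · have hx : ¬ v x = x := by
        intro hx
        apply hy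
        have h1 : (v ^ (-k)) ((v ^ k) y) = y := by
          rw [← Equiv.Perm.mul_apply, ← zpow_add, neg_add_cancel, zpow_zero,
            Equiv.Perm.one_apply]
        rw [hk] at h1
        rw [← h1, zpow_apply_eq_self_of_apply_eq_self hx]
        exact hx
      rw [dif_neg hx, dif_neg hy]
      exact congrArg Sum.inr (Subtype.ext (hsc.cycleOf_eq))
  let f : orbitRel.Quotient (zpowers v) α → {z : α // v z = z} ⊕ v.cycleFactorsFinset :=
    Quotient.lift _ wd
  have hbij : Function.Bijective f := by
    constructor
    · rintro ⟨x⟩ ⟨y⟩ h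
      change f (Quotient.mk _ x) = f (Quotient.mk _ y) at h
      by_cases hx : v x = x <;> by_cases hy : v y = y <;>
        simp only [f, Quotient.lift_mk, dif_pos, dif_neg, hx, hy, not_false_iff] at h
      · obtain rfl : x = y := congrArg Subtype.val (Sum.inl.inj h)
        rfl
      · cases h
      · cases h
      · have hc : v.cycleOf x = v.cycleOf y := Subtype.ext_iff.mp (Sum.inr.inj h)
        have hxs : x ∈ (v.cycleOf x).support := by
          rw [mem_support_cycleOf_iff]
          exact ⟨Equiv.Perm.SameCycle.refl v x, mem_support.mpr hx⟩
        rw [hc] at hxs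
        obtain ⟨i, hi⟩ := (mem_support_cycleOf_iff.mp hxs).1
        exact Quotient.sound (orbitRel_zpowers_apply.mpr ⟨i, hi⟩)
    · rintro (⟨x, hx⟩ | ⟨c, hc⟩)
      · exact ⟨Quotient.mk _ x, by simp only [f, Quotient.lift_mk, dif_pos hx]⟩
      · have hcyc : c.IsCycle := (mem_cycleFactorsFinset_iff.mp hc).1
        obtain ⟨x, hx1, -⟩ := hcyc
        have hxc : x ∈ c.support := mem_support.mpr hx1
        have hvx : ¬ v x = x := by
          rw [← (mem_cycleFactorsFinset_iff.mp hc).2 x hxc]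
          exact hx1
        refine ⟨Quotient.mk _ x, ?_⟩
        simp only [f, Quotient.lift_mk, dif_neg hvx]
        exact congrArg Sum.inr (Subtype.ext (cycle_is_cycleOf hxc hc).symm)
  have hcard := Nat.card_eq_of_bijective f hbij
  rw [Nat.card_sum] at hcard
  have h1 : Nat.card {z : α // v z = z} = Fintype.card α - v.support.card := by
    rw [Nat.card_eq_fintype_card, Fintype.card_subtype, ← Finset.card_compl]
    congr 1
    ext z
    simp [Equiv.Perm.mem_support]
  have h2 : Nat.card v.cycleFactorsFinset = v.cycleFactorsFinset.card := by
    rw [Nat.card_eq_fintype_card, Fintype.card_coe]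
  rw [h1, h2] at hcard
  exact hcard
end SwapMul


end LenAux

namespace LenAux

theorem cycleType_card_le_sum {d : ℕ} (v : Equiv.Perm (Fin d)) :
    Multiset.card v.cycleType ≤ v.cycleType.sum := by
  have h : Multiset.card v.cycleType * 1 ≤ v.cycleType.sum :=
    Multiset.card_nsmul_le_sum (fun x hx =>
      le_trans (by norm_num) (Equiv.Perm.two_le_of_mem_cycleType hx))
  omega

theorem permLen_add_card {d : ℕ} (v : Equiv.Perm (Fin d)) :
    permLen v + Nat.card (orbitRel.Quotient (zpowers v) (Fin d)) = d := by
  have h1 := card_orbitQuot_zpowers v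
  have hsum := Equiv.Perm.sum_cycleType v
  have hcard : Multiset.card v.cycleType = v.cycleFactorsFinset.card := by
    rw [Equiv.Perm.cycleType_def, Multiset.card_map]
    rfl
  have hle := cycleType_card_le_sum v
  have hsupp : v.support.card ≤ Fintype.card (Fin d) := Finset.card_le_univ _
  rw [Fintype.card_fin] at h1 hsupp
  unfold permLen
  omega

theorem parity_lemma {d : ℕ} (L : List (Equiv.Perm (Fin d)))
    (hL : ∀ t ∈ L, t.IsSwap) : (L.length + permLen L.prod) % 2 = 0 := by
  have h1 := Equiv.Perm.sign_prod_list_swap hL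
  rw [Equiv.Perm.sign_of_cycleType] at h1
  have key : ∀ m n : ℕ, ((-1 : ℤˣ) ^ m = (-1 : ℤˣ) ^ n) → m % 2 = n % 2 := by
    intro m n h
    rcases Nat.even_or_odd m with hm | hm <;> rcases Nat.even_or_odd n with hn | hn
    · rw [Nat.even_iff] at hm hn; omega
    · rw [hm.neg_one_pow, hn.neg_one_pow] at h
      exact absurd h (by decide)
    · rw [hm.neg_one_pow, hn.neg_one_pow] at h
      exact absurd h (by decide)
    · rw [Nat.odd_iff] at hm hn; omega
  have h2 := key _ _ h1
  have hle := cycleType_card_le_sum L.prod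
  unfold permLen
  omega

end LenAux


namespace LenAux

variable {d : ℕ}

theorem card_insert_swap_of_rel (S : Set (Equiv.Perm (Fin d))) {a b : Fin d}
    (hab : orbitRel (closure S) (Fin d) a b) :
    Nat.card (orbitRel.Quotient (closure (insert (Equiv.swap a b) S)) (Fin d)) =
      Nat.card (orbitRel.Quotient (closure S) (Fin d)) :=
  card_quotient_congr (fun x y =>
    (orbitRel_closure_insert_swap S a b x y).trans (merge_apply_of_rel hab x y))

theorem card_insert_swap_of_not_rel (S : Set (Equiv.Perm (Fin d))) {a b : Fin d}
    (hab : ¬ orbitRel (closure S) (Fin d) a b) :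
    Nat.card (orbitRel.Quotient (closure (insert (Equiv.swap a b) S)) (Fin d)) + 1 =
      Nat.card (orbitRel.Quotient (closure S) (Fin d)) := by
  have h1 : Nat.card (Quotient (orbitRel (closure (insert (Equiv.swap a b) S)) (Fin d))) =
      Nat.card (Quotient (merge (orbitRel (closure S) (Fin d)) a b)) :=
    card_quotient_congr (orbitRel_closure_insert_swap S a b)
  have h2 := card_quotient_merge (r := orbitRel (closure S) (Fin d)) (a := a) (b := b) hab
  calc Nat.card (orbitRel.Quotient (closure (insert (Equiv.swap a b) S)) (Fin d)) + 1
      = Nat.card (Quotient (merge (orbitRel (closure S) (Fin d)) a b)) + 1 := by rw [← h1]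
    _ = Nat.card (orbitRel.Quotient (closure S) (Fin d)) := h2

theorem card_closure_singleton (v : Equiv.Perm (Fin d)) :
    Nat.card (orbitRel.Quotient (closure ({v} : Set (Equiv.Perm (Fin d)))) (Fin d)) =
      Nat.card (orbitRel.Quotient (zpowers v) (Fin d)) := by
  rw [zpowers_eq_closure]

theorem permLen_swap_mul_le (a b : Fin d) (v : Equiv.Perm (Fin d)) :
    permLen (Equiv.swap a b * v) ≤ permLen v + 1 := by
  have hz : zpowers (Equiv.swap a b * v) ≤
      closure (insert (Equiv.swap a b) ({v} : Set (Equiv.Perm (Fin d)))) :=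
    zpowers_le.mpr (mul_mem (subset_closure (Set.mem_insert _ _))
      (subset_closure (Set.mem_insert_of_mem _ rfl)))
  have h1 : Nat.card (orbitRel.Quotient
        (closure (insert (Equiv.swap a b) ({v} : Set (Equiv.Perm (Fin d))))) (Fin d)) ≤
      Nat.card (orbitRel.Quotient (zpowers (Equiv.swap a b * v)) (Fin d)) :=
    card_orbitQuot_le_of_le hz
  have h4 := permLen_add_card v
  have h5 := permLen_add_card (Equiv.swap a b * v)
  by_cases hab : orbitRel (closure ({v} : Set (Equiv.Perm (Fin d)))) (Fin d) a b
  · have h2 := card_insert_swap_of_rel _ hab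
    rw [card_closure_singleton] at h2
    omega
  · have h2 := card_insert_swap_of_not_rel _ hab
    rw [card_closure_singleton] at h2
    omega

theorem permLen_le_swap_mul (a b : Fin d) (v : Equiv.Perm (Fin d)) :
    permLen v ≤ permLen (Equiv.swap a b * v) + 1 := by
  have h := permLen_swap_mul_le a b (Equiv.swap a b * v)
  rw [← mul_assoc, Equiv.swap_mul_self, one_mul] at h
  exact h

theorem permLen_swap_mul_succ {a b : Fin d} (v : Equiv.Perm (Fin d))
    (hb : ¬ orbitRel (zpowers v) (Fin d) a b) :
    permLen (Equiv.swap a b * v) = permLen v + 1 := by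
  have hb' : ¬ ∃ k : ℤ, (v ^ k) a = b := by
    rintro ⟨k, hk⟩
    exact hb ((orbitRel (zpowers v) (Fin d)).iseqv.symm (orbitRel_zpowers_apply.mpr ⟨k, hk⟩))
  have h1 : Nat.card (orbitRel.Quotient (zpowers (Equiv.swap a b * v)) (Fin d)) =
      Nat.card (orbitRel.Quotient
        (closure (insert (Equiv.swap a b) ({v} : Set (Equiv.Perm (Fin d))))) (Fin d)) :=
    card_quotient_congr (orbitRel_swap_mul v hb')
  have hab2 : ¬ orbitRel (closure ({v} : Set (Equiv.Perm (Fin d)))) (Fin d) a b := by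
    intro h
    apply hb
    rw [← zpowers_eq_closure] at h
    exact h
  have h2 := card_insert_swap_of_not_rel _ hab2
  rw [card_closure_singleton] at h2
  have h4 := permLen_add_card v
  have h5 := permLen_add_card (Equiv.swap a b * v)
  omega

end LenAux

/-- For a sequence of `n` transpositions with product `s` and orbit partition `Σ` of the
generated subgroup, one has `n + |s| ≡ 0 (mod 2)` and `n + |s| ≥ 2|Σ|`, where
`|Σ| = Σ_j (#Σ_j - 1) = d -` (number of orbits). -/
theorem length_add_permLen_parity_and_bound {d : ℕ} (L : List (Equiv.Perm (Fin d)))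
    (hL : ∀ t ∈ L, t.IsSwap) :
    (L.length + permLen L.prod) % 2 = 0 ∧
    2 * (d - numOrbits (Subgroup.closure {x : Equiv.Perm (Fin d) | x ∈ L}))
      ≤ L.length + permLen L.prod := by
  refine ⟨LenAux.parity_lemma L hL, ?_⟩
  unfold numOrbits
  induction L with
  | nil =>
    have hset : {x : Equiv.Perm (Fin d) | x ∈ ([] : List (Equiv.Perm (Fin d)))} = ∅ := by
      ext x; simp
    rw [hset, Subgroup.closure_empty]
    have hbot := LenAux.card_orbitQuot_bot (G := Equiv.Perm (Fin d)) (α := Fin d)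
    rw [Nat.card_eq_fintype_card (α := Fin d), Fintype.card_fin] at hbot
    have hp1 : permLen (1 : Equiv.Perm (Fin d)) = 0 := by simp [permLen]
    simp only [List.prod_nil, List.length_nil, hp1, hbot]
    omega
  | cons t L' ih =>
    obtain ⟨a, b, hab, rfl⟩ := hL t List.mem_cons_self
    have ihyp := ih (fun x hx => hL x (List.mem_cons_of_mem _ hx))
    set S' : Set (Equiv.Perm (Fin d)) := {x | x ∈ L'} with hS'
    have hset : {x : Equiv.Perm (Fin d) | x ∈ Equiv.swap a b :: L'} =
        insert (Equiv.swap a b) S' := by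
      ext x; simp [hS', List.mem_cons]
    rw [hset, List.prod_cons, List.length_cons]
    have hvH : L'.prod ∈ Subgroup.closure S' :=
      Subgroup.list_prod_mem _ (fun x hx => Subgroup.subset_closure hx)
    by_cases hab2 : MulAction.orbitRel (Subgroup.closure S') (Fin d) a b
    · rw [LenAux.card_insert_swap_of_rel _ hab2]
      have h1 := LenAux.permLen_le_swap_mul a b L'.prod
      omega
    · have h1 := LenAux.card_insert_swap_of_not_rel _ hab2
      have hb2 : ¬ MulAction.orbitRel (Subgroup.zpowers L'.prod) (Fin d) a b :=
        fun h => hab2 (LenAux.orbitRel_le_of_le (Subgroup.zpowers_le.mpr hvH) h)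
      have h2 := LenAux.permLen_swap_mul_succ L'.prod hb2
      have h3 := LenAux.card_orbitQuot_le (α := Fin d) (Subgroup.closure S')
      rw [Nat.card_eq_fintype_card (α := Fin d), Fintype.card_fin] at h3
      omega
end

section
/- Let (t_1,...,t_n) be a sequence of transpositions in S_d with product s = t_1⋯t_n, generating a transitive subgroup of S_d. Then n + |s| ≥ 2d − 2, where |s| = d minus the number of cycles of s. -/
open Equiv Equiv.Perm


variable {α : Type*}

section counting

/-- If `r ≤ s` then the quotient by `s` has at most as many classes. -/
lemma quotCard_le_of_le [Finite α] {r s : Setoid α} (h : ∀ x y, r.r x y → s.r x y) :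
    Nat.card (Quotient s) ≤ Nat.card (Quotient r) := by
  apply Nat.card_le_card_of_surjective
    (Quotient.lift (fun x => (Quotient.mk s x)) (fun x y hxy => Quotient.sound (h x y hxy)))
  intro q
  induction q using Quotient.ind with
  | _ x => exact ⟨Quotient.mk r x, rfl⟩

lemma quotCard_le_succ [Finite α] {r s : Setoid α} {a b : α}
    (hrs : ∀ x y, r.r x y → s.r x y)
    (h : ∀ x y, s.r x y → r.r x y ∨ ((r.r x a ∨ r.r x b) ∧ (r.r y a ∨ r.r y b))) :
    Nat.card (Quotient r) ≤ Nat.card (Quotient s) + 1 := by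
  classical
  have hcard : Nat.card (Quotient s ⊕ Unit) = Nat.card (Quotient s) + 1 := by
    simp [Nat.card_sum]
  rw [← hcard]
  have hwd : ∀ x y, r.r x y →
      (if r.r x b then (Sum.inr () : Quotient s ⊕ Unit) else Sum.inl (Quotient.mk s x)) =
      (if r.r y b then (Sum.inr () : Quotient s ⊕ Unit) else Sum.inl (Quotient.mk s y)) := by
    intro x y hxy
    by_cases hxb : r.r x b
    · rw [if_pos hxb, if_pos (r.iseqv.trans (r.iseqv.symm hxy) hxb)]
    · rw [if_neg hxb, if_neg (fun hyb => hxb (r.iseqv.trans hxy hyb)),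
        Quotient.sound (hrs x y hxy)]
  apply Nat.card_le_card_of_injective (Quotient.lift _ hwd)
  intro q1 q2
  induction q1 using Quotient.ind with
  | _ x =>
  induction q2 using Quotient.ind with
  | _ y =>
  intro hq
  simp only [Quotient.lift_mk] at hq
  by_cases hxb : r.r x b <;> by_cases hyb : r.r y b
  · exact Quotient.sound (r.iseqv.trans hxb (r.iseqv.symm hyb))
  · rw [if_pos hxb, if_neg hyb] at hq; exact absurd hq (by simp)
  · rw [if_neg hxb, if_pos hyb] at hq; exact absurd hq (by simp)
  · rw [if_neg hxb, if_neg hyb] at hq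
    have hs : s.r x y := Quotient.exact (Sum.inl.inj hq)
    rcases h x y hs with hr | ⟨hx, hy⟩
    · exact Quotient.sound hr
    · have hxa : r.r x a := hx.resolve_right hxb
      have hya : r.r y a := hy.resolve_right hyb
      exact Quotient.sound (r.iseqv.trans hxa (r.iseqv.symm hya))

lemma quotCard_lt [Finite α] {r s : Setoid α} {a b : α}
    (hrs : ∀ x y, r.r x y → s.r x y) (hab : s.r a b) (hnab : ¬ r.r a b) :
    Nat.card (Quotient s) < Nat.card (Quotient r) := by
  have i1 := Fintype.ofFinite (Quotient r)
  have i2 := Fintype.ofFinite (Quotient s)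
  rw [Nat.card_eq_fintype_card, Nat.card_eq_fintype_card]
  apply Fintype.card_lt_of_surjective_not_injective
    (Quotient.lift (fun x => (Quotient.mk s x)) (fun x y hxy => Quotient.sound (hrs x y hxy)))
  · intro q
    induction q using Quotient.ind with
    | _ x => exact ⟨Quotient.mk r x, rfl⟩
  · intro hinj
    apply hnab
    exact Quotient.exact (hinj (a₁ := Quotient.mk r a) (a₂ := Quotient.mk r b)
      (Quotient.sound hab))

end counting


variable {α : Type*} [Fintype α] [DecidableEq α]

/-- If every `f`-step stays in a `g`-cycle, then `f`-cycles refine `g`-cycles. -/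
lemma sameCycle_of_forall_step {f g : Perm α} (h : ∀ x, g.SameCycle x (f x)) :
    ∀ {x y}, f.SameCycle x y → g.SameCycle x y := by
  intro x y hxy
  suffices h' : ∀ n : ℕ, g.SameCycle x ((f ^ n) x) by
    obtain ⟨i, -, rfl⟩ := hxy.exists_pow_eq'
    exact h' i
  intro n
  induction n with
  | zero => simpa using Equiv.Perm.SameCycle.refl g x
  | succ n ih =>
    rw [pow_succ', Equiv.Perm.mul_apply]
    exact ih.trans (h _)

/-- Key combinatorial lemma: if `a`,`b` are in different cycles of `s`, then they are in the
same cycle of `s * swap a b`. -/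
lemma sameCycle_mul_swap {s : Perm α} {a b : α} (hab : a ≠ b)
    (h : ¬ s.SameCycle a b) : (s * Equiv.swap a b).SameCycle a b := by
  set w := s * Equiv.swap a b with hw
  have hwa : w a = s b := by simp [hw, Equiv.Perm.mul_apply]
  have hws : ∀ y, y ≠ a → y ≠ b → w y = s y := by
    intro y hya hyb
    simp [hw, Equiv.Perm.mul_apply, Equiv.swap_apply_of_ne_of_ne hya hyb]
  have key : ∀ k : ℕ, (∀ j, 1 ≤ j → j ≤ k → (s ^ j) b ≠ b) →
      (w ^ (k + 1)) a = (s ^ (k + 1)) b := by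
    intro k
    induction k with
    | zero => intro _; simpa using hwa
    | succ n ih =>
      intro hj
      have h1 : (w ^ (n + 1)) a = (s ^ (n + 1)) b :=
        ih (fun j hj1 hj2 => hj j hj1 (hj2.trans (Nat.le_succ n)))
      have hya : (s ^ (n + 1)) b ≠ a := by
        intro he
        exact h (Equiv.Perm.SameCycle.symm ⟨(n + 1 : ℕ), by exact_mod_cast he⟩)
      have hyb : (s ^ (n + 1)) b ≠ b := hj (n + 1) (by omega) (by omega)
      calc (w ^ (n + 2)) a = w ((w ^ (n + 1)) a) := by
            rw [← Equiv.Perm.mul_apply, ← pow_succ']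
          _ = s ((s ^ (n + 1)) b) := by rw [h1, hws _ hya hyb]
          _ = (s ^ (n + 2)) b := by rw [← Equiv.Perm.mul_apply, ← pow_succ']
  have hex : ∃ j : ℕ, (s ^ (j + 1)) b = b := by
    refine ⟨orderOf s - 1, ?_⟩
    have : orderOf s - 1 + 1 = orderOf s := Nat.sub_add_cancel (orderOf_pos s)
    rw [this, pow_orderOf_eq_one]; rfl
  classical
  set m := Nat.find hex with hm
  have hspec : (s ^ (m + 1)) b = b := Nat.find_spec hex
  have hmin : ∀ j, 1 ≤ j → j ≤ m → (s ^ j) b ≠ b := by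
    intro j hj1 hj2 he
    have : ¬ (s ^ (j - 1 + 1)) b = b := Nat.find_min hex (by omega)
    rw [Nat.sub_add_cancel hj1] at this
    exact this he
  have : (w ^ (m + 1)) a = b := by rw [key m hmin, hspec]
  exact ⟨(m + 1 : ℕ), by exact_mod_cast this⟩

/-- If `a`,`b` are in the same cycle of `u`, then cycles of `u * swap a b` refine cycles of
`u`. -/
lemma sameCycle_mul_swap_le {u : Perm α} {a b : α} (hab : u.SameCycle a b) :
    ∀ {x y}, (u * Equiv.swap a b).SameCycle x y → u.SameCycle x y := by
  apply sameCycle_of_forall_step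
  intro x
  rcases eq_or_ne x a with rfl | hxa
  · have : (u * Equiv.swap x b) x = u b := by simp [Equiv.Perm.mul_apply]
    rw [this]; exact hab.apply_right
  rcases eq_or_ne x b with rfl | hxb
  · have : (u * Equiv.swap a x) x = u a := by simp [Equiv.Perm.mul_apply]
    rw [this]; exact hab.symm.apply_right
  · have : (u * Equiv.swap a b) x = u x := by
      simp [Equiv.Perm.mul_apply, Equiv.swap_apply_of_ne_of_ne hxa hxb]
    rw [this]
    exact (Equiv.Perm.SameCycle.refl u x).apply_right

/-- Cycles of `u * swap a b` merge at most the cycles of `a` and `b` of `u`. -/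
lemma sameCycle_mul_swap_cases {u : Perm α} {a b : α} :
    ∀ {x y}, (u * Equiv.swap a b).SameCycle x y →
      u.SameCycle x y ∨
        ((u.SameCycle x a ∨ u.SameCycle x b) ∧ (u.SameCycle y a ∨ u.SameCycle y b)) := by
  intro x y hxy
  set w := u * Equiv.swap a b with hw
  have hub : u.SameCycle (u b) b := (Equiv.Perm.SameCycle.refl u b).apply_right.symm
  have hua : u.SameCycle (u a) a := (Equiv.Perm.SameCycle.refl u a).apply_right.symm
  have step : ∀ z,
      (u.SameCycle x z ∨ ((u.SameCycle x a ∨ u.SameCycle x b) ∧ (u.SameCycle z a ∨ u.SameCycle z b))) →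
      (u.SameCycle x (w z) ∨ ((u.SameCycle x a ∨ u.SameCycle x b) ∧ (u.SameCycle (w z) a ∨ u.SameCycle (w z) b))) := by
    intro z ih
    rcases eq_or_ne z a with rfl | hza
    · have hv : w z = u b := by simp [hw, Equiv.Perm.mul_apply]
      rw [hv]
      rcases ih with h1 | ⟨h1, -⟩
      · exact Or.inr ⟨Or.inl h1, Or.inr hub⟩
      · exact Or.inr ⟨h1, Or.inr hub⟩
    rcases eq_or_ne z b with rfl | hzb
    · have hv : w z = u a := by simp [hw, Equiv.Perm.mul_apply]
      rw [hv]
      rcases ih with h1 | ⟨h1, -⟩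
      · exact Or.inr ⟨Or.inr h1, Or.inl hua⟩
      · exact Or.inr ⟨h1, Or.inl hua⟩
    · have hv : w z = u z := by
        simp [hw, Equiv.Perm.mul_apply, Equiv.swap_apply_of_ne_of_ne hza hzb]
      rw [hv]
      rcases ih with h1 | ⟨h1, h2⟩
      · exact Or.inl h1.apply_right
      · refine Or.inr ⟨h1, ?_⟩
        have huz : u.SameCycle (u z) z := (Equiv.Perm.SameCycle.refl u z).apply_right.symm
        rcases h2 with h2 | h2
        · exact Or.inl (huz.trans h2)
        · exact Or.inr (huz.trans h2)
  suffices h' : ∀ n : ℕ,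
      (u.SameCycle x ((w ^ n) x) ∨ ((u.SameCycle x a ∨ u.SameCycle x b) ∧
        (u.SameCycle ((w ^ n) x) a ∨ u.SameCycle ((w ^ n) x) b))) by
    obtain ⟨i, -, rfl⟩ := hxy.exists_pow_eq'
    exact h' i
  intro n
  induction n with
  | zero => simpa using Or.inl (Equiv.Perm.SameCycle.refl u x)
  | succ n ih =>
    have hstep : (w ^ (n + 1)) x = w ((w ^ n) x) := by
      rw [← Equiv.Perm.mul_apply, ← pow_succ']
    rw [hstep]
    exact step _ ih



/-- The setoid of the same-cycle relation. -/
def scSetoid {d : ℕ} (s : Equiv.Perm (Fin d)) : Setoid (Fin d) :=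
  ⟨Equiv.Perm.SameCycle s, Equiv.Perm.SameCycle.equivalence s⟩

/-- Number of cycles of `s`, counting fixed points. -/
noncomputable def cyc {d : ℕ} (s : Equiv.Perm (Fin d)) : ℕ :=
  Nat.card (Quotient (scSetoid s))

lemma le_cyc_add_permLen {d : ℕ} (s : Equiv.Perm (Fin d)) : d ≤ cyc s + permLen s := by
  classical
  have hsum : s.cycleType.sum = s.support.card := Equiv.Perm.sum_cycleType s
  have hcard : Multiset.card s.cycleType = s.cycleFactorsFinset.card := by
    rw [Equiv.Perm.cycleType_def]
    simp
  have hFS : s.cycleFactorsFinset.card ≤ s.support.card := by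
    rw [← hsum, ← hcard]
    have h1 := Multiset.card_nsmul_le_sum (s := s.cycleType) (a := 1)
      (fun x hx => le_trans one_le_two (Equiv.Perm.two_le_of_mem_cycleType hx))
    simpa using h1
  have hSd : s.support.card ≤ d := by
    simpa using Finset.card_le_card (Finset.subset_univ s.support)
  have hpick : ∀ c : s.cycleFactorsFinset, ∃ x, x ∈ (c : Equiv.Perm (Fin d)).support := by
    intro c
    obtain ⟨x, hx, -⟩ := (Equiv.Perm.mem_cycleFactorsFinset_iff.mp c.2).1
    exact ⟨x, Equiv.Perm.mem_support.mpr hx⟩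
  choose pick hpickmem using hpick
  have key : (d - s.support.card) + s.cycleFactorsFinset.card ≤ cyc s := by
    have hinj : Function.Injective
        (fun z : (↥(s.supportᶜ) ⊕ ↥s.cycleFactorsFinset) =>
          Sum.elim (fun x : ↥(s.supportᶜ) => Quotient.mk (scSetoid s) (x : Fin d))
            (fun c : ↥s.cycleFactorsFinset => Quotient.mk (scSetoid s) (pick c)) z) := by
      have hfix : ∀ x : ↥(s.supportᶜ), Function.IsFixedPt s (x : Fin d) := by
        intro x
        have := x.2
        rw [Finset.mem_compl, Equiv.Perm.mem_support, not_not] at this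
        exact this
      have hmem : ∀ c : ↥s.cycleFactorsFinset, (pick c) ∈ s.support := by
        intro c
        exact Equiv.Perm.mem_cycleFactorsFinset_support_le c.2 (hpickmem c)
      rintro (x | c) (y | c') h
      · have hxy : s.SameCycle x y := Quotient.exact h
        exact congrArg Sum.inl (Subtype.ext (hxy.eq_of_left (hfix x)))
      · have hxy : s.SameCycle x (pick c') := Quotient.exact h
        have hxe := hxy.eq_of_left (hfix x)
        have hx' : (x : Fin d) ∈ s.support := by rw [hxe]; exact hmem c'
        exact absurd hx' (Finset.mem_compl.mp x.2)
      · have hxy : s.SameCycle (pick c) y := Quotient.exact h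
        have hye := hxy.symm.eq_of_left (hfix y)
        have hy' : (y : Fin d) ∈ s.support := by rw [hye]; exact hmem c
        exact absurd hy' (Finset.mem_compl.mp y.2)
      · have hxy : s.SameCycle (pick c) (pick c') := Quotient.exact h
        have h1 : (c : Equiv.Perm (Fin d)) = s.cycleOf (pick c) :=
          Equiv.Perm.cycle_is_cycleOf (hpickmem c) c.2
        have h2 : (c' : Equiv.Perm (Fin d)) = s.cycleOf (pick c') :=
          Equiv.Perm.cycle_is_cycleOf (hpickmem c') c'.2
        have := hxy.cycleOf_eq
        exact congrArg Sum.inr (Subtype.ext (by rw [h1, h2, this]))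
    have hle := Nat.card_le_card_of_injective _ hinj
    rw [Nat.card_sum, Nat.card_eq_finsetCard, Nat.card_eq_finsetCard] at hle
    rw [Finset.card_compl, Fintype.card_fin] at hle
    exact hle
  have hperm : permLen s = s.support.card - s.cycleFactorsFinset.card := by
    rw [permLen, hsum, hcard]
  omega

/-- The orbit setoid of the subgroup generated by `S`. -/
def orbSetoid {d : ℕ} (S : Set (Equiv.Perm (Fin d))) : Setoid (Fin d) where
  r x y := ∃ σ ∈ Subgroup.closure S, σ x = y
  iseqv := by
    constructor
    · exact fun x => ⟨1, Subgroup.one_mem _, rfl⟩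
    · rintro x y ⟨σ, hσ, rfl⟩
      exact ⟨σ⁻¹, inv_mem hσ, Equiv.symm_apply_apply σ x⟩
    · rintro x y z ⟨σ, hσ, rfl⟩ ⟨τ, hτ, rfl⟩
      exact ⟨τ * σ, mul_mem hτ hσ, rfl⟩

noncomputable def orbCount {d : ℕ} (S : Set (Equiv.Perm (Fin d))) : ℕ :=
  Nat.card (Quotient (orbSetoid S))

section swaplemmas

variable {d : ℕ}

lemma swap_mul_cancel (u : Equiv.Perm (Fin d)) (a b : Fin d) :
    (u * Equiv.swap a b) * Equiv.swap a b = u := by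
  rw [mul_assoc, Equiv.swap_mul_self, mul_one]

/-- Multiplying by a swap changes the number of cycles by at most one (downward). -/
lemma cyc_mul_swap_le (u : Equiv.Perm (Fin d)) {a b : Fin d} (hab : a ≠ b) :
    cyc (u * Equiv.swap a b) ≤ cyc u + 1 := by
  by_cases hc : u.SameCycle a b
  · refine quotCard_le_succ (r := scSetoid (u * Equiv.swap a b)) (s := scSetoid u)
      (a := a) (b := b) ?_ ?_
    · exact fun x y hxy => sameCycle_mul_swap_le hc hxy
    · intro x y hxy
      exact sameCycle_mul_swap_cases (u := u * Equiv.swap a b) (a := a) (b := b)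
        (by rw [swap_mul_cancel]; exact hxy)
  · have hK : (u * Equiv.swap a b).SameCycle a b := sameCycle_mul_swap hab hc
    have hle : Nat.card (Quotient (scSetoid (u * Equiv.swap a b))) ≤
        Nat.card (Quotient (scSetoid u)) := by
      refine quotCard_le_of_le (r := scSetoid u) (s := scSetoid (u * Equiv.swap a b)) ?_
      intro x y hxy
      exact sameCycle_mul_swap_le hK (by rw [swap_mul_cancel]; exact hxy)
    exact le_trans hle (Nat.le_succ _)

/-- Multiplying by a swap joining two distinct cycles strictly decreases the cycle count. -/
lemma cyc_mul_swap_lt (u : Equiv.Perm (Fin d)) {a b : Fin d} (hab : a ≠ b)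
    (hc : ¬ u.SameCycle a b) : cyc (u * Equiv.swap a b) < cyc u := by
  have hK : (u * Equiv.swap a b).SameCycle a b := sameCycle_mul_swap hab hc
  refine quotCard_lt (r := scSetoid u) (s := scSetoid (u * Equiv.swap a b))
    (a := a) (b := b) ?_ hK hc
  intro x y hxy
  exact sameCycle_mul_swap_le hK (by rw [swap_mul_cancel]; exact hxy)

/-- If `a` and `b` are already in the same orbit, adding `swap a b` does not change orbits. -/
lemma orb_le_of_rel {S : Set (Equiv.Perm (Fin d))} {a b : Fin d}
    (hR : (orbSetoid S).r a b) :
    orbCount S ≤ orbCount (S ∪ {Equiv.swap a b}) := by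
  refine quotCard_le_of_le (r := orbSetoid (S ∪ {Equiv.swap a b})) (s := orbSetoid S) ?_
  rintro x y ⟨σ, hσ, rfl⟩
  revert x
  induction hσ using Subgroup.closure_induction with
  | mem g hg =>
    intro x
    rcases hg with hg | hg
    · exact ⟨g, Subgroup.subset_closure hg, rfl⟩
    · rcases Set.mem_singleton_iff.mp hg with rfl
      rcases eq_or_ne x a with rfl | hxa
      · rw [Equiv.swap_apply_left]; exact hR
      rcases eq_or_ne x b with rfl | hxb
      · rw [Equiv.swap_apply_right]; exact (orbSetoid S).iseqv.symm hR
      · rw [Equiv.swap_apply_of_ne_of_ne hxa hxb]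
  | one => intro x; exact (orbSetoid S).iseqv.refl x
  | mul g h hg hh ihg ihh =>
    intro x
    exact (orbSetoid S).iseqv.trans (ihh x) (by rw [Equiv.Perm.mul_apply]; exact ihg (h x))
  | inv g hg ih =>
    intro x
    have := ih (g⁻¹ x)
    rw [show g (g⁻¹ x) = x from Equiv.apply_symm_apply g x] at this
    exact (orbSetoid S).iseqv.symm this

/-- Adding a swap to the generators decreases the orbit count by at most one. -/
lemma orb_le_succ (S : Set (Equiv.Perm (Fin d))) (a b : Fin d) :
    orbCount S ≤ orbCount (S ∪ {Equiv.swap a b}) + 1 := by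
  set r := orbSetoid S with hr
  refine quotCard_le_succ (r := orbSetoid S) (s := orbSetoid (S ∪ {Equiv.swap a b}))
    (a := a) (b := b) ?_ ?_
  · rintro x y ⟨σ, hσ, rfl⟩
    exact ⟨σ, Subgroup.closure_mono Set.subset_union_left hσ, rfl⟩
  · rintro x y ⟨σ, hσ, rfl⟩
    revert x
    have PR : ∀ x, r.r x x := r.iseqv.refl
    have PS : ∀ {x y}, r.r x y → r.r y x := r.iseqv.symm
    have PT : ∀ {x y z}, r.r x y → r.r y z → r.r x z := r.iseqv.trans
    induction hσ using Subgroup.closure_induction with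
    | mem g hg =>
      intro x
      rcases hg with hg | hg
      · exact Or.inl ⟨g, Subgroup.subset_closure hg, rfl⟩
      · rcases Set.mem_singleton_iff.mp hg with rfl
        rcases eq_or_ne x a with rfl | hxa
        · rw [Equiv.swap_apply_left]
          exact Or.inr ⟨Or.inl (PR x), Or.inr (PR b)⟩
        rcases eq_or_ne x b with rfl | hxb
        · rw [Equiv.swap_apply_right]
          exact Or.inr ⟨Or.inr (PR x), Or.inl (PR a)⟩
        · rw [Equiv.swap_apply_of_ne_of_ne hxa hxb]
          exact Or.inl (PR x)
    | one => intro x; exact Or.inl (PR x)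
    | mul g h hg hh ihg ihh =>
      intro x
      rw [Equiv.Perm.mul_apply]
      rcases ihh x with h1 | ⟨h1, h2⟩
      · rcases ihg (h x) with h3 | ⟨h3, h4⟩
        · exact Or.inl (PT h1 h3)
        · exact Or.inr ⟨Or.imp (PT h1) (PT h1) h3, h4⟩
      · rcases ihg (h x) with h3 | ⟨h3, h4⟩
        · exact Or.inr ⟨h1, Or.imp (fun hh' => PT (PS h3) hh') (fun hh' => PT (PS h3) hh') h2⟩
        · exact Or.inr ⟨h1, h4⟩
    | inv g hg ih =>
      intro x
      rcases ih (g⁻¹ x) with h1 | ⟨h1, h2⟩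
      · rw [show g (g⁻¹ x) = x from Equiv.apply_symm_apply g x] at h1
        exact Or.inl (PS h1)
      · rw [show g (g⁻¹ x) = x from Equiv.apply_symm_apply g x] at h2
        exact Or.inr ⟨h2, h1⟩

end swaplemmas

section main

variable {d : ℕ}

lemma main_invariant (L : List (Equiv.Perm (Fin d))) (hL : ∀ t ∈ L, t.IsSwap) :
    d + cyc L.prod ≤ L.length + 2 * orbCount {x : Equiv.Perm (Fin d) | x ∈ L} := by
  induction L using List.reverseRecOn with
  | nil =>
    have h1 : cyc (1 : Equiv.Perm (Fin d)) ≤ d := by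
      have := Nat.card_le_card_of_surjective (Quotient.mk (scSetoid (1 : Equiv.Perm (Fin d))))
        (fun q => by induction q using Quotient.ind with | _ x => exact ⟨x, rfl⟩)
      simpa [cyc] using this
    have h2 : d ≤ orbCount ({x : Equiv.Perm (Fin d) | x ∈ ([] : List (Equiv.Perm (Fin d)))}) := by
      have hinj : Function.Injective
          (fun x : Fin d => Quotient.mk (orbSetoid
            {x : Equiv.Perm (Fin d) | x ∈ ([] : List (Equiv.Perm (Fin d)))}) x) := by
        intro x y h
        obtain ⟨σ, hσ, rfl⟩ := Quotient.exact h
        have hempty : {x : Equiv.Perm (Fin d) | x ∈ ([] : List (Equiv.Perm (Fin d)))} =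
            (∅ : Set (Equiv.Perm (Fin d))) := by ext u; simp
        rw [hempty, Subgroup.closure_empty, Subgroup.mem_bot] at hσ
        rw [hσ]; rfl
      have := Nat.card_le_card_of_injective _ hinj
      simpa [orbCount] using this
    simp only [List.prod_nil, List.length_nil, Nat.zero_add]
    omega
  | append_singleton L' t ih =>
    have hL' : ∀ u ∈ L', Equiv.Perm.IsSwap u := fun u hu => hL u (by simp [hu])
    obtain ⟨a, b, hab, rfl⟩ := hL t (by simp)
    have hset : {x : Equiv.Perm (Fin d) | x ∈ L' ++ [Equiv.swap a b]} =
        {x : Equiv.Perm (Fin d) | x ∈ L'} ∪ {Equiv.swap a b} := by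
      ext σ; simp [or_comm]
    have hprod : (L' ++ [Equiv.swap a b]).prod = L'.prod * Equiv.swap a b := by simp
    have hlen : (L' ++ [Equiv.swap a b]).length = L'.length + 1 := by simp
    rw [hset, hprod, hlen]
    have ih' := ih hL'
    by_cases hR : (orbSetoid {x : Equiv.Perm (Fin d) | x ∈ L'}).r a b
    · have hc := cyc_mul_swap_le L'.prod hab
      have ho := orb_le_of_rel hR
      omega
    · have hnc : ¬ L'.prod.SameCycle a b := by
        intro hS
        obtain ⟨i, hi⟩ := hS
        have hmem : L'.prod ∈ Subgroup.closure {x : Equiv.Perm (Fin d) | x ∈ L'} :=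
          Subgroup.list_prod_mem _ (fun x hx => Subgroup.subset_closure hx)
        exact hR ⟨L'.prod ^ i, Subgroup.zpow_mem _ hmem i, hi⟩
      have hc := cyc_mul_swap_lt L'.prod hab hnc
      have ho := orb_le_succ {x : Equiv.Perm (Fin d) | x ∈ L'} a b
      omega


/-- If transpositions `t_1,...,t_n` in `S_d` generate a transitive subgroup and
`s = t_1 ⋯ t_n`, then `n + |s| ≥ 2d - 2`. -/
theorem transitive_length_add_permLen_ge {d : ℕ} (L : List (Equiv.Perm (Fin d)))
    (hL : ∀ t ∈ L, t.IsSwap)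
    (htrans : ∀ x y : Fin d,
      ∃ σ ∈ Subgroup.closure {x : Equiv.Perm (Fin d) | x ∈ L}, σ x = y) :
    2 * d - 2 ≤ L.length + permLen L.prod := by
  have hinv := main_invariant L hL
  have hsub : ∀ q q' : Quotient (orbSetoid {x : Equiv.Perm (Fin d) | x ∈ L}), q = q' := by
    intro q q'
    induction q using Quotient.ind with | _ x =>
    induction q' using Quotient.ind with | _ y =>
    exact Quotient.sound (htrans x y)
  have h1 : orbCount {x : Equiv.Perm (Fin d) | x ∈ L} ≤ 1 := by
    have := Nat.card_le_card_of_injective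
      (fun _ : Quotient (orbSetoid {x : Equiv.Perm (Fin d) | x ∈ L}) => ())
      (fun q q' _ => hsub q q')
    simpa [orbCount] using this
  have h2 := le_cyc_add_permLen L.prod
  omega
end main
end

section
/- Let t_1,...,t_n be transpositions in S_d generating a transitive subgroup, and let s = t_1⋯t_n. Suppose the cyclic group ⟨s⟩ has q ≥ 2 orbits Δ_1,...,Δ_q on {1,...,d}, and let a ∈ Δ_i, b ∈ Δ_j with i ≠ j. Then (t_1,...,t_n) is braid-equivalent to a sequence of the form (...,(ab),(ab)), i.e. one ending in two copies of the transposition (ab). -/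
section Machinery

variable {G : Type*} [Group G]

lemma be_refl (L : List G) : BraidEquiv L L := Relation.EqvGen.refl L

lemma be_symm {L M : List G} (h : BraidEquiv L M) : BraidEquiv M L :=
  Relation.EqvGen.symm _ _ h

lemma be_trans {L M N : List G} (h1 : BraidEquiv L M) (h2 : BraidEquiv M N) :
    BraidEquiv L N := Relation.EqvGen.trans _ _ _ h1 h2

lemma be_step {L M : List G} (h : BraidStep L M) : BraidEquiv L M :=
  Relation.EqvGen.rel _ _ h

lemma step_append {L M : List G} (A B : List G) (h : BraidStep L M) :
    BraidStep (A ++ L ++ B) (A ++ M ++ B) := by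
  obtain ⟨l₁, l₂, a, b⟩ := h
  have := BraidStep.step (A ++ l₁) (l₂ ++ B) a b
  simpa [List.append_assoc] using this

lemma be_append {L M : List G} (A B : List G) (h : BraidEquiv L M) :
    BraidEquiv (A ++ L ++ B) (A ++ M ++ B) := by
  induction h with
  | rel x y h => exact be_step (step_append A B h)
  | refl x => exact be_refl _
  | symm x y _ ih => exact be_symm ih
  | trans x y z _ _ ih1 ih2 => exact be_trans ih1 ih2

lemma be_cons {L M : List G} (u : G) (h : BraidEquiv L M) :
    BraidEquiv (u :: L) (u :: M) := by
  simpa using be_append [u] [] h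

lemma be_append_right {L M : List G} (B : List G) (h : BraidEquiv L M) :
    BraidEquiv (L ++ B) (M ++ B) := by
  simpa using be_append [] B h

lemma step_prod {L M : List G} (h : BraidStep L M) : L.prod = M.prod := by
  obtain ⟨l₁, l₂, a, b⟩ := h
  simp [List.prod_append, mul_assoc]

lemma be_prod {L M : List G} (h : BraidEquiv L M) : L.prod = M.prod := by
  induction h with
  | rel x y h => exact step_prod h
  | refl x => rfl
  | symm _ _ _ ih => exact ih.symm
  | trans _ _ _ _ _ ih1 ih2 => exact ih1.trans ih2

lemma step_closure {L M : List G} (h : BraidStep L M) :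
    Subgroup.closure {x | x ∈ L} = Subgroup.closure {x | x ∈ M} := by
  obtain ⟨l₁, l₂, a, b⟩ := h
  apply le_antisymm
  · refine (Subgroup.closure_le _).2 ?_
    intro x hx
    simp only [Set.mem_setOf_eq, List.mem_append, List.mem_cons] at hx
    rcases hx with h1 | h2 | h3 | h4
    · exact Subgroup.subset_closure (by simp [h1])
    · exact Subgroup.subset_closure (by simp [h2])
    · have ha : a ∈ Subgroup.closure {y : G | y ∈ l₁ ++ (a * b * a⁻¹) :: a :: l₂} :=
        Subgroup.subset_closure (by simp)
      have hcm : a * b * a⁻¹ ∈ Subgroup.closure {y : G | y ∈ l₁ ++ (a * b * a⁻¹) :: a :: l₂} :=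
        Subgroup.subset_closure (by simp)
      have hxb : x = a⁻¹ * (a * b * a⁻¹) * a := by rw [h3]; group
      rw [hxb]
      exact mul_mem (mul_mem (inv_mem ha) hcm) ha
    · exact Subgroup.subset_closure (by simp [h4])
  · refine (Subgroup.closure_le _).2 ?_
    intro x hx
    simp only [Set.mem_setOf_eq, List.mem_append, List.mem_cons] at hx
    rcases hx with h1 | h2 | h3 | h4
    · exact Subgroup.subset_closure (by simp [h1])
    · have ha : a ∈ Subgroup.closure {y : G | y ∈ l₁ ++ a :: b :: l₂} :=
        Subgroup.subset_closure (by simp)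
      have hb : b ∈ Subgroup.closure {y : G | y ∈ l₁ ++ a :: b :: l₂} :=
        Subgroup.subset_closure (by simp)
      rw [h2]
      exact mul_mem (mul_mem ha hb) (inv_mem ha)
    · exact Subgroup.subset_closure (by simp [h3])
    · exact Subgroup.subset_closure (by simp [h4])

lemma be_closure {L M : List G} (h : BraidEquiv L M) :
    Subgroup.closure {x | x ∈ L} = Subgroup.closure {x | x ∈ M} := by
  induction h with
  | rel x y h => exact step_closure h
  | refl x => rfl
  | symm _ _ _ ih => exact ih.symm
  | trans _ _ _ _ _ ih1 ih2 => exact ih1.trans ih2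

lemma move_front (t : G) (L₁ L₂ : List G) :
    BraidEquiv (L₁ ++ t :: L₂) (t :: ((L₁.map fun u => t⁻¹ * u * t) ++ L₂)) := by
  induction L₁ with
  | nil => exact be_refl _
  | cons u L₁ ih =>
    refine be_trans (be_cons u ih) (be_symm (be_step ?_))
    have := BraidStep.step ([] : List G) ((L₁.map fun v => t⁻¹ * v * t) ++ L₂) t (t⁻¹ * u * t)
    have he : t * (t⁻¹ * u * t) * t⁻¹ = u := by group
    simpa [he] using this

lemma move_back (t : G) (L₁ L₂ : List G) :
    BraidEquiv (L₁ ++ t :: L₂) (L₁ ++ (L₂.map fun u => t * u * t⁻¹) ++ [t]) := by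
  induction L₂ generalizing L₁ with
  | nil => simpa using be_refl (L₁ ++ [t])
  | cons u L₂ ih =>
    have h1 : BraidStep (L₁ ++ t :: u :: L₂) (L₁ ++ (t * u * t⁻¹) :: t :: L₂) :=
      BraidStep.step _ _ _ _
    refine be_trans (be_step h1) ?_
    have := ih (L₁ ++ [t * u * t⁻¹])
    simpa [List.append_assoc] using this

end Machinery

section Swaps

variable {α : Type*} [DecidableEq α]

lemma isSwap_conj' {b : Equiv.Perm α} (hb : b.IsSwap) (a : Equiv.Perm α) :
    (a * b * a⁻¹).IsSwap := by
  obtain ⟨x, y, hxy, rfl⟩ := hb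
  exact ⟨a x, a y, fun h => hxy (a.injective h), (Equiv.swap_apply_apply a x y).symm⟩

lemma step_swaps_iff {L M : List (Equiv.Perm α)} (h : BraidStep L M) :
    (∀ t ∈ L, t.IsSwap) ↔ (∀ t ∈ M, t.IsSwap) := by
  obtain ⟨l₁, l₂, a, b⟩ := h
  constructor
  · intro hL t ht
    simp only [List.mem_append, List.mem_cons] at ht
    rcases ht with h1 | h2 | h3 | h4
    · exact hL t (by simp [h1])
    · subst h2; exact isSwap_conj' (hL b (by simp)) a
    · subst h3; exact hL t (by simp)
    · exact hL t (by simp [h4])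
  · intro hM t ht
    simp only [List.mem_append, List.mem_cons] at ht
    rcases ht with h1 | h2 | h3 | h4
    · exact hM t (by simp [h1])
    · subst h2; exact hM t (by simp)
    · subst h3
      have hc : (a * t * a⁻¹).IsSwap := hM _ (by simp)
      have : t = a⁻¹ * (a * t * a⁻¹) * a⁻¹⁻¹ := by group
      rw [this]
      exact isSwap_conj' hc a⁻¹
    · exact hM t (by simp [h4])

lemma be_swaps_iff {L M : List (Equiv.Perm α)} (h : BraidEquiv L M) :
    (∀ t ∈ L, t.IsSwap) ↔ (∀ t ∈ M, t.IsSwap) := by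
  induction h with
  | rel x y h => exact step_swaps_iff h
  | refl x => exact Iff.rfl
  | symm _ _ _ ih => exact ih.symm
  | trans _ _ _ _ _ ih1 ih2 => exact ih1.trans ih2

/-- The graph on points whose edges are the transpositions occurring in `L`. -/
def Adj (L : List (Equiv.Perm α)) (x y : α) : Prop :=
  x ≠ y ∧ Equiv.swap x y ∈ L

lemma adj_symm {L : List (Equiv.Perm α)} : Symmetric (Adj L) := by
  rintro x y ⟨hne, hm⟩
  exact ⟨hne.symm, by rwa [Equiv.swap_comm]⟩

lemma closure_reach {L : List (Equiv.Perm α)} (hL : ∀ t ∈ L, t.IsSwap)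
    {σ : Equiv.Perm α} (hσ : σ ∈ Subgroup.closure {x | x ∈ L}) (x : α) :
    Relation.ReflTransGen (Adj L) x (σ x) := by
  refine Subgroup.closure_induction
    (p := fun σ _ => ∀ x, Relation.ReflTransGen (Adj L) x (σ x)) ?_ ?_ ?_ ?_ hσ x
  · intro u hu y
    obtain ⟨p, q, hpq, rfl⟩ := hL u hu
    by_cases hyp : y = p
    · subst hyp
      rw [Equiv.swap_apply_left]
      exact Relation.ReflTransGen.single ⟨hpq, hu⟩
    · by_cases hyq : y = q
      · subst hyq
        rw [Equiv.swap_apply_right]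
        exact Relation.ReflTransGen.single ⟨Ne.symm hpq, by rwa [Equiv.swap_comm]⟩
      · rw [Equiv.swap_apply_of_ne_of_ne hyp hyq]
  · intro y
    simp only [Equiv.Perm.one_apply]
    exact Relation.ReflTransGen.refl
  · intro f g _ _ hf hg y
    have h1 := hg y
    have h2 := hf (g y)
    simpa [Equiv.Perm.mul_apply] using h1.trans h2
  · intro f _ hf y
    have h1 := hf (f⁻¹ y)
    rw [← Equiv.Perm.mul_apply, mul_inv_cancel, Equiv.Perm.one_apply] at h1
    haveI : Std.Symm (Adj L) := ⟨fun x y h => adj_symm h⟩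
    exact symm_of (Relation.ReflTransGen (Adj L)) h1

lemma reach_mem_closure {L : List (Equiv.Perm α)} {x y : α}
    (h : Relation.ReflTransGen (Adj L) x y) :
    ∃ σ ∈ Subgroup.closure {x : Equiv.Perm α | x ∈ L}, σ x = y := by
  induction h with
  | refl => exact ⟨1, one_mem _, rfl⟩
  | @tail w v _ hadj ih =>
    obtain ⟨σ, hσ, hσx⟩ := ih
    refine ⟨Equiv.swap w v * σ, mul_mem (Subgroup.subset_closure hadj.2) hσ, ?_⟩
    simp [Equiv.Perm.mul_apply, hσx, Equiv.swap_apply_left]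

lemma rtg_cons {M : List (Equiv.Perm α)} {a z : α}
    {u v : α} (h : Relation.ReflTransGen (Adj (Equiv.swap a z :: M)) u v) :
    Relation.ReflTransGen (Adj M) u v ∨
    (Relation.ReflTransGen (Adj M) u a ∧ Relation.ReflTransGen (Adj M) z v) ∨
    (Relation.ReflTransGen (Adj M) u z ∧ Relation.ReflTransGen (Adj M) a v) := by
  induction h with
  | refl => exact Or.inl Relation.ReflTransGen.refl
  | @tail w v' _ hadj ih =>
    rcases List.mem_cons.1 hadj.2 with heq | hmem
    · -- the edge used is `swap a z`, so `{w, v'} = {a, z}`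
      have hv' : v' = Equiv.swap a z w := by
        have := congrArg (fun σ : Equiv.Perm α => σ w) heq
        simpa [Equiv.swap_apply_left] using this
      by_cases hwa : w = a
      · subst hwa
        rw [Equiv.swap_apply_left] at hv'
        subst hv'
        rcases ih with h1 | ⟨h2a, _⟩ | ⟨h3a, _⟩
        · exact Or.inr (Or.inl ⟨h1, Relation.ReflTransGen.refl⟩)
        · exact Or.inr (Or.inl ⟨h2a, Relation.ReflTransGen.refl⟩)
        · exact Or.inl h3a
      · by_cases hwz : w = z
        · subst hwz
          rw [Equiv.swap_apply_right] at hv'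
          subst hv'
          rcases ih with h1 | ⟨h2a, _⟩ | ⟨h3a, _⟩
          · exact Or.inr (Or.inr ⟨h1, Relation.ReflTransGen.refl⟩)
          · exact Or.inl h2a
          · exact Or.inr (Or.inr ⟨h3a, Relation.ReflTransGen.refl⟩)
        · rw [Equiv.swap_apply_of_ne_of_ne hwa hwz] at hv'
          exact absurd hv'.symm hadj.1
    · -- the edge is in `M`
      have hadj' : Adj M w v' := ⟨hadj.1, hmem⟩
      rcases ih with h1 | ⟨h2a, h2b⟩ | ⟨h3a, h3b⟩
      · exact Or.inl (h1.tail hadj')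
      · exact Or.inr (Or.inl ⟨h2a, h2b.tail hadj'⟩)
      · exact Or.inr (Or.inr ⟨h3a, h3b.tail hadj'⟩)

/-- Key lemma: if `a` and `b` are joined in the graph of the swaps of `L`, then `L`
is braid-equivalent to a list ending in `swap a b`. -/
lemma reach_swap :
    ∀ n (L : List (Equiv.Perm α)), L.length ≤ n → (∀ t ∈ L, t.IsSwap) →
      ∀ a b : α, a ≠ b → Relation.ReflTransGen (Adj L) a b →
      ∃ R, BraidEquiv L (R ++ [Equiv.swap a b]) := by
  intro n
  induction n with
  | zero =>
    intro L hlen _ a b hab hreach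
    have hL0 : L = [] := List.length_eq_zero_iff.1 (Nat.le_zero.1 hlen)
    subst hL0
    rcases hreach.cases_head with heq | ⟨z, hadj, _⟩
    · exact absurd heq hab
    · exact absurd hadj.2 (by simp)
  | succ n ih =>
    intro L hlen hL a b hab hreach
    rcases hreach.cases_head with heq | ⟨z, hadj, hzb⟩
    · exact absurd heq hab
    obtain ⟨haz, hezL⟩ := hadj
    obtain ⟨L₁, L₂, rfl⟩ := List.append_of_mem hezL
    set e := Equiv.swap a z with he
    by_cases hzb' : z = b
    · subst hzb'
      refine ⟨L₁ ++ (L₂.map fun u => e * u * e⁻¹), ?_⟩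
      simpa [List.append_assoc] using move_back e L₁ L₂
    · set M : List (Equiv.Perm α) := (L₁.map fun u => e⁻¹ * u * e) ++ L₂ with hM
      have hEM : BraidEquiv (L₁ ++ e :: L₂) (e :: M) := move_front e L₁ L₂
      have hswapsEM : ∀ t ∈ e :: M, t.IsSwap := (be_swaps_iff hEM).1 hL
      have hswapsM : ∀ t ∈ M, t.IsSwap := fun t ht => hswapsEM t (List.mem_cons_of_mem _ ht)
      have hlenM : M.length ≤ n := by
        have := hlen
        simp only [List.length_append, List.length_cons] at this
        simp only [hM, List.length_append, List.length_map]
        omega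
      -- transfer reachability to `e :: M`
      have hreachEM : Relation.ReflTransGen (Adj (e :: M)) a b := by
        obtain ⟨σ, hσ, hσa⟩ := reach_mem_closure hreach
        rw [be_closure hEM] at hσ
        have := closure_reach hswapsEM hσ a
        rwa [hσa] at this
      have hcases := rtg_cons hreachEM
      have hfin : Relation.ReflTransGen (Adj M) a b ∨ Relation.ReflTransGen (Adj M) z b := by
        rcases hcases with h1 | ⟨_, h2b⟩ | ⟨_, h3b⟩
        · exact Or.inl h1
        · exact Or.inr h2b
        · exact Or.inl h3b
      rcases hfin with hM1 | hM2
      · obtain ⟨R, hR⟩ := ih M hlenM hswapsM a b hab hM1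
        exact ⟨e :: R, be_trans hEM (be_cons e hR)⟩
      · obtain ⟨R, hR⟩ := ih M hlenM hswapsM z b hzb' hM2
        have step2 : BraidEquiv (e :: M) (e :: (R ++ [Equiv.swap z b])) := be_cons e hR
        have step3 : BraidEquiv (e :: (R ++ [Equiv.swap z b]))
            (((R ++ [Equiv.swap z b]).map fun u => e * u * e⁻¹) ++ [e]) := by
          simpa using move_back e [] (R ++ [Equiv.swap z b])
        have hconj : e * Equiv.swap z b * e⁻¹ = Equiv.swap a b := by
          rw [he, ← Equiv.swap_apply_apply (Equiv.swap a z) z b, Equiv.swap_apply_right,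
            Equiv.swap_apply_of_ne_of_ne (Ne.symm hab) (Ne.symm hzb')]
        have hmap : ((R ++ [Equiv.swap z b]).map fun u => e * u * e⁻¹)
            = (R.map fun u => e * u * e⁻¹) ++ [Equiv.swap a b] := by
          simp [hconj]
        have step4 : BraidStep ((R.map fun u => e * u * e⁻¹) ++ [Equiv.swap a b, e])
            ((R.map fun u => e * u * e⁻¹) ++
              [Equiv.swap a b * e * (Equiv.swap a b)⁻¹, Equiv.swap a b]) :=
          BraidStep.step _ [] _ _
        refine ⟨(R.map fun u => e * u * e⁻¹) ++ [Equiv.swap a b * e * (Equiv.swap a b)⁻¹], ?_⟩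
        have step5 : BraidEquiv (((R ++ [Equiv.swap z b]).map fun u => e * u * e⁻¹) ++ [e])
            ((R.map fun u => e * u * e⁻¹) ++
              [Equiv.swap a b * e * (Equiv.swap a b)⁻¹, Equiv.swap a b]) := by
          rw [hmap]
          have heq : (R.map fun u => e * u * e⁻¹) ++ [Equiv.swap a b] ++ [e]
              = (R.map fun u => e * u * e⁻¹) ++ [Equiv.swap a b, e] := by simp
          rw [heq]
          exact be_step step4
        have chain := be_trans hEM (be_trans step2 (be_trans step3 step5))
        simpa [List.append_assoc] using chain

end Swaps

/-- If transpositions `t_1,...,t_n` generate a transitive subgroup of `S_d`, and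
`a`, `b` lie in different orbits of the cyclic group generated by `s = t_1 ⋯ t_n`,
then the sequence is braid-equivalent to one ending in `(ab),(ab)`. -/
theorem braidEquiv_end_double_swap {d : ℕ} (L : List (Equiv.Perm (Fin d)))
    (hL : ∀ t ∈ L, t.IsSwap)
    (htrans : ∀ x y : Fin d,
      ∃ σ ∈ Subgroup.closure {x : Equiv.Perm (Fin d) | x ∈ L}, σ x = y)
    (a b : Fin d)
    (hdiff : ∀ m : ℤ, (L.prod ^ m) a ≠ b) :
    ∃ L₀ : List (Equiv.Perm (Fin d)),
      BraidEquiv L (L₀ ++ [Equiv.swap a b, Equiv.swap a b]) := by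
  classical
  have hab : a ≠ b := by
    intro h
    exact hdiff 0 (by simp [h])
  -- Phase 1: get a list ending in `swap a b`
  have hreachL : Relation.ReflTransGen (Adj L) a b := by
    obtain ⟨σ, hσ, hσa⟩ := htrans a b
    have := closure_reach hL hσ a
    rwa [hσa] at this
  obtain ⟨R, hR⟩ := reach_swap L.length L le_rfl hL a b hab hreachL
  set c := Equiv.swap a b with hc
  have hswapsN : ∀ t ∈ R ++ [c], t.IsSwap := (be_swaps_iff hR).1 hL
  have hswapsR : ∀ t ∈ R, t.IsSwap := fun t ht => hswapsN t (by simp [ht])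
  have hprod : L.prod = R.prod * c := by
    have := be_prod hR
    simpa [List.prod_append] using this
  set w := R.prod with hw
  -- Phase 2: show `a` and `b` are joined in the graph of `R`
  have hreachR : Relation.ReflTransGen (Adj R) a b := by
    by_contra hnot
    have hwmem : w ∈ Subgroup.closure {x : Equiv.Perm (Fin d) | x ∈ R} :=
      Subgroup.list_prod_mem _ fun x hx => Subgroup.subset_closure hx
    have key : ∀ k : ℕ, (∃ m : ℤ, (L.prod ^ m) a = b) ∨
        ((L.prod ^ (k + 1)) a = (w ^ (k + 1)) b) := by
      intro k
      induction k with
      | zero =>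
        right
        simp [hprod, hc, Equiv.Perm.mul_apply, Equiv.swap_apply_left]
      | succ k ihk =>
        rcases ihk with h | h
        · exact Or.inl h
        · by_cases hb : (w ^ (k + 1)) b = b
          · refine Or.inl ⟨((k : ℤ) + 1), ?_⟩
            have : ((k : ℤ) + 1) = ((k + 1 : ℕ) : ℤ) := by push_cast; ring
            rw [this, zpow_natCast, h, hb]
          · right
            have hba : (w ^ (k + 1)) b ≠ a := by
              intro hcontra
              have h1 := closure_reach hswapsR (pow_mem hwmem (k + 1)) b
              rw [hcontra] at h1
              haveI : Std.Symm (Adj R) := ⟨fun x y h => adj_symm h⟩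
              exact hnot (symm_of (Relation.ReflTransGen (Adj R)) h1)
            have e1 : (L.prod ^ (k + 1 + 1)) a = L.prod ((L.prod ^ (k + 1)) a) := by
              rw [pow_succ', Equiv.Perm.mul_apply]
            have e2 : (w ^ (k + 1 + 1)) b = w ((w ^ (k + 1)) b) := by
              rw [pow_succ', Equiv.Perm.mul_apply]
            rw [e1, e2, h, hprod, hc, Equiv.Perm.mul_apply,
              Equiv.swap_apply_of_ne_of_ne hba hb]
    have hordpos : 0 < orderOf w := orderOf_pos w
    rcases key (orderOf w - 1) with ⟨m, hm⟩ | h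
    · exact hdiff m hm
    · have heq : orderOf w - 1 + 1 = orderOf w := Nat.succ_pred_eq_of_pos hordpos
      rw [heq, pow_orderOf_eq_one] at h
      refine hdiff (orderOf w : ℤ) ?_
      rw [zpow_natCast]
      simpa using h
  obtain ⟨R', hR'⟩ := reach_swap R.length R le_rfl hswapsR a b hab hreachR
  refine ⟨R', ?_⟩
  have h2 : BraidEquiv (R ++ [c]) ((R' ++ [c]) ++ [c]) := be_append_right [c] hR'
  have final := be_trans hR h2
  simpa [List.append_assoc] using final
end
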